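/- arXiv:2206.06462 — 7 statements merged into one kernel-verified Lean document; each statement's English description precedes it below -/
import Mathlib

section
/- Fix τ > 0. Let ρ₀ = 1/(1+τ), let p₀(x) = (1+τ^{-1})^{-1/2}·φ(x/√(1+τ^{-1})) be the density of N(0, 1+τ^{-1}), and let z(x) = x/√(1+τ^{-1}), so that Φ(z(x)) equals the CDF P₀(x) of p₀. Then for all x, x₁ ∈ ℝ, [∫_ℝ φ(x−θ)·φ(x₁−θ)·√τ·φ(√τ·θ) dθ] / (p₀(x)·p₀(x₁)) = φ₂(z(x), z(x₁); ρ₀) / (φ(z(x))·φ(z(x₁))). That is, the first-step predictive update kernel of the univariate Gaussian DPMM component is the bivariate Gaussian copula density c(P₀(x), P₀(x₁); ρ₀) with correlation ρ₀ = 1/(1+τ). -/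
open MeasureTheory

/-- `φ`, the standard normal density. -/
noncomputable def stdNormalPDF (z : ℝ) : ℝ :=
  (Real.sqrt (2 * Real.pi))⁻¹ * Real.exp (-z ^ 2 / 2)

/-- `φ₂(·,·;ρ)`, the standard bivariate normal density with correlation `ρ`. -/
noncomputable def biNormalPDF (z w ρ : ℝ) : ℝ :=
  (2 * Real.pi * Real.sqrt (1 - ρ ^ 2))⁻¹ *
    Real.exp (-(z ^ 2 - 2 * ρ * z * w + w ^ 2) / (2 * (1 - ρ ^ 2)))

/-- the first-step predictive update kernel of the univariate Gaussian
DPMM component, `h₁(x,x₁) = E[K(x|θ)K(x₁|θ)] / (p₀(x) p₀(x₁))` with `θ ~ N(0,τ⁻¹)`,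
equals the bivariate Gaussian copula density `c(P₀(x), P₀(x₁); ρ₀)` with
`ρ₀ = 1/(1+τ)`, where `P₀(x) = Φ(z(x))` with `z(x) = x/√(1+τ⁻¹)`. -/
theorem dpmm_first_step_copula (τ : ℝ) (hτ : 0 < τ)
    (ρ₀ : ℝ) (hρ₀ : ρ₀ = 1 / (1 + τ))
    (p₀ : ℝ → ℝ)
    (hp₀ : p₀ = fun t => (Real.sqrt (1 + τ⁻¹))⁻¹ * stdNormalPDF (t / Real.sqrt (1 + τ⁻¹)))
    (z : ℝ → ℝ) (hz : z = fun t => t / Real.sqrt (1 + τ⁻¹))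
    (x x₁ : ℝ) :
    (∫ θ : ℝ, stdNormalPDF (x - θ) * stdNormalPDF (x₁ - θ) *
        (Real.sqrt τ * stdNormalPDF (Real.sqrt τ * θ))) / (p₀ x * p₀ x₁) =
      biNormalPDF (z x) (z x₁) ρ₀ / (stdNormalPDF (z x) * stdNormalPDF (z x₁)) := by
  have hπ : (0:ℝ) < Real.pi := Real.pi_pos
  have h2π : (0:ℝ) < 2 * Real.pi := by positivity
  have h1τ : (0:ℝ) < 1 + τ := by linarith
  have h2τ : (0:ℝ) < 2 + τ := by linarith
  have hs : (0:ℝ) < 1 + τ⁻¹ := by positivity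
  set s : ℝ := 1 + τ⁻¹ with hsdef
  have hss : Real.sqrt s * Real.sqrt s = s := Real.mul_self_sqrt hs.le
  have hssne : Real.sqrt s ≠ 0 := by positivity
  have hsval : s = (1 + τ) / τ := by rw [hsdef]; field_simp; ring
  -- the common exponent value
  set A : ℝ := Real.exp (-(((1+τ) * (x^2 + x₁^2) - 2 * x * x₁) / (2 * (2+τ)))) with hA
  have hτs : Real.sqrt τ ^ 2 = τ := Real.sq_sqrt hτ.le
  set b : ℝ := (2 + τ) / 2 with hb
  have hbpos : 0 < b := by positivity
  set m : ℝ := (x + x₁) / (2 + τ) with hm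
  set c : ℝ := (Real.sqrt (2 * Real.pi))⁻¹ with hc
  -- Step 1: pointwise rewrite of the integrand, completing the square
  have hintegrand : ∀ θ : ℝ,
      stdNormalPDF (x - θ) * stdNormalPDF (x₁ - θ) *
        (Real.sqrt τ * stdNormalPDF (Real.sqrt τ * θ)) =
      (c ^ 3 * Real.sqrt τ * A) * Real.exp (-b * (θ - m) ^ 2) := by
    intro θ
    simp only [stdNormalPDF, ← hc]
    rw [mul_pow, hτs]
    have hexp : -(x - θ)^2/2 + (-(x₁ - θ)^2/2 + -(τ * θ^2)/2) =
        (-(((1+τ) * (x^2 + x₁^2) - 2 * x * x₁) / (2 * (2+τ)))) + (-b * (θ - m)^2) := by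
      rw [hb, hm]
      field_simp
      ring
    calc c * Real.exp (-(x - θ) ^ 2 / 2) * (c * Real.exp (-(x₁ - θ) ^ 2 / 2)) *
          (Real.sqrt τ * (c * Real.exp (-(τ * θ ^ 2) / 2)))
        = c ^ 3 * Real.sqrt τ *
            Real.exp (-(x - θ)^2/2 + (-(x₁ - θ)^2/2 + -(τ * θ^2)/2)) := by
          rw [Real.exp_add, Real.exp_add]; ring
      _ = (c ^ 3 * Real.sqrt τ * A) * Real.exp (-b * (θ - m) ^ 2) := by
          rw [hexp, Real.exp_add, hA]; ring
  -- Step 2: compute the integral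
  have hint : (∫ θ : ℝ, stdNormalPDF (x - θ) * stdNormalPDF (x₁ - θ) *
        (Real.sqrt τ * stdNormalPDF (Real.sqrt τ * θ)))
      = (c ^ 3 * Real.sqrt τ * A) * Real.sqrt (Real.pi / b) := by
    simp only [hintegrand]
    rw [integral_const_mul]
    congr 1
    have := integral_sub_right_eq_self (μ := (volume : Measure ℝ)) (fun θ => Real.exp (-b * θ ^ 2)) m
    rw [this, integral_gaussian]
  have hπb : Real.sqrt (Real.pi / b) = Real.sqrt (2 * Real.pi) / Real.sqrt (2 + τ) := by
    rw [hb, show Real.pi / ((2 + τ)/2) = 2 * Real.pi / (2 + τ) by field_simp,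
      Real.sqrt_div h2π.le]
  -- Step 3: the bivariate normal side
  have h1ρ : 1 - ρ₀ ^ 2 = τ * (2 + τ) / (1 + τ) ^ 2 := by
    rw [hρ₀]; field_simp; ring
  have h1ρs : Real.sqrt (1 - ρ₀ ^ 2) = Real.sqrt τ * Real.sqrt (2 + τ) / (1 + τ) := by
    rw [h1ρ, Real.sqrt_div' _ (by positivity), Real.sqrt_mul hτ.le,
      Real.sqrt_sq h1τ.le]
  have h1ρne : (1:ℝ) - ρ₀ ^ 2 ≠ 0 := by rw [h1ρ]; positivity
  have hzx2 : ∀ t : ℝ, (t / Real.sqrt s) ^ 2 = t ^ 2 / s := by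
    intro t; rw [div_pow, sq (Real.sqrt s), hss]
  have hzw : (x / Real.sqrt s) * (x₁ / Real.sqrt s) = x * x₁ / s := by
    rw [div_mul_div_comm, hss]
  have hbi : biNormalPDF (x / Real.sqrt s) (x₁ / Real.sqrt s) ρ₀ =
      (2 * Real.pi * (Real.sqrt τ * Real.sqrt (2 + τ) / (1 + τ)))⁻¹ * A := by
    rw [biNormalPDF, h1ρs, hA]
    congr 2
    rw [hzx2, hzx2, mul_assoc (2 * ρ₀), hzw, h1ρ, hρ₀, hsval]
    field_simp
    ring
  -- positivity facts for the densities
  have hP : ∀ t : ℝ, 0 < stdNormalPDF t := by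
    intro t; rw [stdNormalPDF]; positivity
  -- Step 4: assemble
  rw [hint, hπb, hp₀, hz]
  simp only
  rw [hbi, div_eq_div_iff
    (mul_ne_zero (mul_ne_zero (inv_ne_zero hssne) (hP _).ne')
      (mul_ne_zero (inv_ne_zero hssne) (hP _).ne'))
    (mul_ne_zero (hP _).ne' (hP _).ne')]
  have hτm : Real.sqrt τ * Real.sqrt τ = τ := Real.mul_self_sqrt hτ.le
  have h2τm : Real.sqrt (2+τ) * Real.sqrt (2+τ) = 2 + τ := Real.mul_self_sqrt h2τ.le
  have h2πm : Real.sqrt (2*Real.pi) * Real.sqrt (2*Real.pi) = 2 * Real.pi :=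
    Real.mul_self_sqrt h2π.le
  have hτne : Real.sqrt τ ≠ 0 := by positivity
  have h2τne : Real.sqrt (2+τ) ≠ 0 := by positivity
  have h2πne : Real.sqrt (2*Real.pi) ≠ 0 := by positivity
  have hssinv : (Real.sqrt s)⁻¹ * (Real.sqrt s)⁻¹ = τ / (1 + τ) := by
    rw [← mul_inv, hss, hsval, inv_div]
  have hkey : c ^ 3 * Real.sqrt τ * (Real.sqrt (2 * Real.pi) / Real.sqrt (2 + τ)) =
      (2 * Real.pi * (Real.sqrt τ * Real.sqrt (2 + τ) / (1 + τ)))⁻¹ *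
        ((Real.sqrt s)⁻¹ * (Real.sqrt s)⁻¹) := by
    have ha2 : Real.sqrt (2 * Real.pi) ^ 2 = 2 * Real.pi := Real.sq_sqrt h2π.le
    rw [hssinv, hc,
      show (2 * Real.pi * (Real.sqrt τ * Real.sqrt (2 + τ) / (1 + τ)))⁻¹ * (τ / (1 + τ)) =
        τ / (2 * Real.pi * Real.sqrt τ * Real.sqrt (2 + τ)) by field_simp,
      show (Real.sqrt (2 * Real.pi))⁻¹ ^ 3 * Real.sqrt τ *
          (Real.sqrt (2 * Real.pi) / Real.sqrt (2 + τ)) =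
        Real.sqrt τ / (Real.sqrt (2 * Real.pi) ^ 2 * Real.sqrt (2 + τ)) by
          field_simp,
      div_eq_div_iff (by positivity) (by positivity)]
    linear_combination (2 * Real.pi * Real.sqrt (2 + τ)) * hτs -
      (τ * Real.sqrt (2 + τ)) * ha2
  linear_combination (A * stdNormalPDF (x / Real.sqrt s) *
    stdNormalPDF (x₁ / Real.sqrt s)) * hkey
end

section
/- Fix τ > 0 and k ∈ (−1,1). Let ρ₀ = 1/(1+τ), let p₀(y) = (1+τ^{-1})^{-1/2}·φ(y/√(1+τ^{-1})) be the density of N(0, 1+τ^{-1}), and let z(y) = y/√(1+τ^{-1}). Let g_prior be the bivariate normal density with mean zero and covariance τ^{-1}·[[1, k],[k, 1]]. Then for all y, y₁ ∈ ℝ, [∫∫ φ(y−θ)·φ(y₁−θ′)·g_prior(θ,θ′) dθ dθ′] / (p₀(y)·p₀(y₁)) = φ₂(z(y), z(y₁); ρ₀·k) / (φ(z(y))·φ(z(y₁))). That is, the first-step copula update of the autoregressive model is the bivariate Gaussian copula density with the data-dependent correlation parameter ρ₀·k. -/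
open MeasureTheory Matrix

/-- The Lebesgue density of the bivariate Gaussian measure with mean `m` and
(invertible) covariance matrix `S`. -/
noncomputable def gauss2PDF (m : Fin 2 → ℝ) (S : Matrix (Fin 2) (Fin 2) ℝ)
    (y : Fin 2 → ℝ) : ℝ :=
  (2 * Real.pi)⁻¹ * (Real.sqrt S.det)⁻¹ *
    Real.exp (-(1 / 2) * ((y - m) ⬝ᵥ (S⁻¹ *ᵥ (y - m))))

/-- Gaussian integral with a general (negative-definite) quadratic exponent. -/
lemma integral_exp_quad (a b c : ℝ) (ha : 0 < a) :
    ∫ x : ℝ, Real.exp (-(a * x ^ 2) + b * x + c)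
      = Real.sqrt (Real.pi / a) * Real.exp (b ^ 2 / (4 * a) + c) := by
  have h : ∀ x : ℝ, -(a * x ^ 2) + b * x + c
      = -(a * (x - b / (2 * a)) ^ 2) + (b ^ 2 / (4 * a) + c) := by
    intro x; field_simp; ring
  simp_rw [h, Real.exp_add]
  rw [MeasureTheory.integral_mul_const,
    MeasureTheory.integral_sub_right_eq_self (fun u => Real.exp (-(a * u ^ 2))) (b / (2 * a))]
  congr 1
  simpa [neg_mul] using integral_gaussian a

set_option maxHeartbeats 1000000 in
/-- the first-step copula update of the autoregressive model — the joint
prior predictive of `(y, y₁)` under the correlated Gaussian prior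
`(θ, θ') ~ N(0, τ⁻¹·[[1,k],[k,1]])`, divided by the product of marginal prior
predictives `p₀(y)·p₀(y₁)` — is the bivariate Gaussian copula density with the
data-dependent correlation parameter `ρ₀ · k`, `ρ₀ = 1/(1+τ)`. -/
theorem ar_first_step_copula (τ k : ℝ) (hτ : 0 < τ) (hk : k ∈ Set.Ioo (-1 : ℝ) 1)
    (ρ₀ : ℝ) (hρ₀ : ρ₀ = 1 / (1 + τ))
    (p₀ : ℝ → ℝ)
    (hp₀ : p₀ = fun t => (Real.sqrt (1 + τ⁻¹))⁻¹ * stdNormalPDF (t / Real.sqrt (1 + τ⁻¹)))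
    (z : ℝ → ℝ) (hz : z = fun t => t / Real.sqrt (1 + τ⁻¹))
    (y y₁ : ℝ) :
    (∫ θ : ℝ, ∫ θ' : ℝ,
        stdNormalPDF (y - θ) * stdNormalPDF (y₁ - θ') *
          gauss2PDF ![0, 0] (τ⁻¹ • !![1, k; k, 1]) ![θ, θ']) / (p₀ y * p₀ y₁) =
      biNormalPDF (z y) (z y₁) (ρ₀ * k) / (stdNormalPDF (z y) * stdNormalPDF (z y₁)) := by
  obtain ⟨hk1, hk2⟩ := hk
  have hπ := Real.pi_pos
  have hd : (0 : ℝ) < 1 - k ^ 2 := by nlinarith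
  have hdτ : (0 : ℝ) < (1 - k ^ 2) + τ := by linarith
  have hQ : (0 : ℝ) < (1 + τ) ^ 2 - k ^ 2 := by nlinarith
  have h1τ : (0 : ℝ) < 1 + τ := by linarith
  have hs : (0 : ℝ) < 1 + τ⁻¹ := by positivity
  have hρ : (0 : ℝ) < 1 - (1 / (1 + τ) * k) ^ 2 := by
    have h : ((1 : ℝ) / (1 + τ) * k) ^ 2 = k ^ 2 / (1 + τ) ^ 2 := by field_simp
    rw [h, sub_pos, div_lt_one (by positivity)]
    nlinarith
  have hA : (0 : ℝ) < ((1 - k ^ 2) + τ) / (2 * (1 - k ^ 2)) := by positivity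
  have ha2 : (0 : ℝ) < ((1 + τ) ^ 2 - k ^ 2) / (2 * ((1 - k ^ 2) + τ)) := by positivity
  -- the 2×2 covariance matrix
  have hg : ∀ θ θ' : ℝ, gauss2PDF ![0, 0] (τ⁻¹ • !![1, k; k, 1]) ![θ, θ']
      = (2 * Real.pi)⁻¹ * (τ / Real.sqrt (1 - k ^ 2)) *
        Real.exp (-(τ / (2 * (1 - k ^ 2))) * (θ ^ 2 - 2 * k * θ * θ' + θ' ^ 2)) := by
    intro θ θ'
    have hdet : (τ⁻¹ • !![1, k; k, 1] : Matrix (Fin 2) (Fin 2) ℝ).det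
        = (1 - k ^ 2) / τ ^ 2 := by
      simp [Matrix.det_fin_two]; field_simp
    have hinv : (τ⁻¹ • !![1, k; k, 1] : Matrix (Fin 2) (Fin 2) ℝ)⁻¹
        = (τ / (1 - k ^ 2)) • !![1, -k; -k, 1] := by
      apply Matrix.inv_eq_right_inv
      ext i j
      fin_cases i <;> fin_cases j <;>
        simp [Matrix.mul_apply, Fin.sum_univ_two] <;> field_simp <;> ring
    unfold gauss2PDF
    rw [hdet, hinv]
    have h1 : (Real.sqrt ((1 - k ^ 2) / τ ^ 2))⁻¹ = τ / Real.sqrt (1 - k ^ 2) := by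
      rw [Real.sqrt_div hd.le, Real.sqrt_sq hτ.le, inv_div]
    rw [h1]
    congr 1
    have hvec : (![θ, θ'] - ![0, 0] : Fin 2 → ℝ) = ![θ, θ'] := by
      ext i; fin_cases i <;> simp
    rw [hvec]
    congr 1
    simp [Matrix.mulVec, dotProduct, Fin.sum_univ_two]
    field_simp
    ring
  -- inner integral
  have hinner : ∀ θ : ℝ,
      (∫ θ' : ℝ, stdNormalPDF (y - θ) * stdNormalPDF (y₁ - θ') *
          gauss2PDF ![0, 0] (τ⁻¹ • !![1, k; k, 1]) ![θ, θ'])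
        = ((Real.sqrt (2 * Real.pi))⁻¹ * (Real.sqrt (2 * Real.pi))⁻¹ *
            ((2 * Real.pi)⁻¹ * (τ / Real.sqrt (1 - k ^ 2))) *
            Real.sqrt (Real.pi / (((1 - k ^ 2) + τ) / (2 * (1 - k ^ 2))))) *
          Real.exp (-((((1 + τ) ^ 2 - k ^ 2) / (2 * ((1 - k ^ 2) + τ))) * θ ^ 2) +
            (y + τ * k * y₁ / ((1 - k ^ 2) + τ)) * θ +
            (-y ^ 2 / 2 - τ * y₁ ^ 2 / (2 * ((1 - k ^ 2) + τ)))) := by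
    intro θ
    have hpt2 : ∀ θ' : ℝ, stdNormalPDF (y - θ) * stdNormalPDF (y₁ - θ') *
        gauss2PDF ![0, 0] (τ⁻¹ • !![1, k; k, 1]) ![θ, θ']
        = ((Real.sqrt (2 * Real.pi))⁻¹ * (Real.sqrt (2 * Real.pi))⁻¹ *
            ((2 * Real.pi)⁻¹ * (τ / Real.sqrt (1 - k ^ 2)))) *
          Real.exp (-((((1 - k ^ 2) + τ) / (2 * (1 - k ^ 2))) * θ' ^ 2) +
            (y₁ + τ * k * θ / (1 - k ^ 2)) * θ' +
            (-(y - θ) ^ 2 / 2 - y₁ ^ 2 / 2 - τ * θ ^ 2 / (2 * (1 - k ^ 2)))) := by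
      intro θ'
      rw [hg]
      unfold stdNormalPDF
      rw [show (-((((1 - k ^ 2) + τ) / (2 * (1 - k ^ 2))) * θ' ^ 2) +
            (y₁ + τ * k * θ / (1 - k ^ 2)) * θ' +
            (-(y - θ) ^ 2 / 2 - y₁ ^ 2 / 2 - τ * θ ^ 2 / (2 * (1 - k ^ 2))))
          = (-(y - θ) ^ 2 / 2) + ((-(y₁ - θ') ^ 2 / 2) +
              (-(τ / (2 * (1 - k ^ 2))) * (θ ^ 2 - 2 * k * θ * θ' + θ' ^ 2))) from by
        field_simp; ring]
      rw [Real.exp_add, Real.exp_add]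
      ring
    rw [show (∫ θ' : ℝ, stdNormalPDF (y - θ) * stdNormalPDF (y₁ - θ') *
        gauss2PDF ![0, 0] (τ⁻¹ • !![1, k; k, 1]) ![θ, θ'])
        = ∫ θ' : ℝ, ((Real.sqrt (2 * Real.pi))⁻¹ * (Real.sqrt (2 * Real.pi))⁻¹ *
            ((2 * Real.pi)⁻¹ * (τ / Real.sqrt (1 - k ^ 2)))) *
          Real.exp (-((((1 - k ^ 2) + τ) / (2 * (1 - k ^ 2))) * θ' ^ 2) +
            (y₁ + τ * k * θ / (1 - k ^ 2)) * θ' +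
            (-(y - θ) ^ 2 / 2 - y₁ ^ 2 / 2 - τ * θ ^ 2 / (2 * (1 - k ^ 2)))) from
      integral_congr_ae (Filter.Eventually.of_forall hpt2)]
    rw [MeasureTheory.integral_const_mul, integral_exp_quad _ _ _ hA]
    rw [show ((y₁ + τ * k * θ / (1 - k ^ 2)) ^ 2 /
          (4 * (((1 - k ^ 2) + τ) / (2 * (1 - k ^ 2)))) +
          (-(y - θ) ^ 2 / 2 - y₁ ^ 2 / 2 - τ * θ ^ 2 / (2 * (1 - k ^ 2))))
        = (-((((1 + τ) ^ 2 - k ^ 2) / (2 * ((1 - k ^ 2) + τ))) * θ ^ 2) +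
            (y + τ * k * y₁ / ((1 - k ^ 2) + τ)) * θ +
            (-y ^ 2 / 2 - τ * y₁ ^ 2 / (2 * ((1 - k ^ 2) + τ)))) from by
      field_simp; ring]
    ring
  -- outer integral
  rw [show (∫ θ : ℝ, ∫ θ' : ℝ, stdNormalPDF (y - θ) * stdNormalPDF (y₁ - θ') *
      gauss2PDF ![0, 0] (τ⁻¹ • !![1, k; k, 1]) ![θ, θ'])
      = ∫ θ : ℝ, ((Real.sqrt (2 * Real.pi))⁻¹ * (Real.sqrt (2 * Real.pi))⁻¹ *
            ((2 * Real.pi)⁻¹ * (τ / Real.sqrt (1 - k ^ 2))) *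
            Real.sqrt (Real.pi / (((1 - k ^ 2) + τ) / (2 * (1 - k ^ 2))))) *
          Real.exp (-((((1 + τ) ^ 2 - k ^ 2) / (2 * ((1 - k ^ 2) + τ))) * θ ^ 2) +
            (y + τ * k * y₁ / ((1 - k ^ 2) + τ)) * θ +
            (-y ^ 2 / 2 - τ * y₁ ^ 2 / (2 * ((1 - k ^ 2) + τ)))) from
    integral_congr_ae (Filter.Eventually.of_forall hinner)]
  rw [MeasureTheory.integral_const_mul, integral_exp_quad _ _ _ ha2]
  simp only [hρ₀, hp₀, hz]
  -- positivity facts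
  have hstd : ∀ t : ℝ, 0 < stdNormalPDF t := by
    intro t; unfold stdNormalPDF; positivity
  have hsqrts : (0 : ℝ) < Real.sqrt (1 + τ⁻¹) := Real.sqrt_pos.mpr hs
  have hne1 : ((Real.sqrt (1 + τ⁻¹))⁻¹ * stdNormalPDF (y / Real.sqrt (1 + τ⁻¹))) *
      ((Real.sqrt (1 + τ⁻¹))⁻¹ * stdNormalPDF (y₁ / Real.sqrt (1 + τ⁻¹))) ≠ 0 := by
    have h1 := hstd (y / Real.sqrt (1 + τ⁻¹)); have h2 := hstd (y₁ / Real.sqrt (1 + τ⁻¹))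
    positivity
  have hne2 : stdNormalPDF (y / Real.sqrt (1 + τ⁻¹)) *
      stdNormalPDF (y₁ / Real.sqrt (1 + τ⁻¹)) ≠ 0 := by
    have h1 := hstd (y / Real.sqrt (1 + τ⁻¹)); have h2 := hstd (y₁ / Real.sqrt (1 + τ⁻¹))
    positivity
  rw [div_eq_div_iff hne1 hne2]
  -- the constant identity
  have hC : ((Real.sqrt (2 * Real.pi))⁻¹ ^ 4 * (2 * Real.pi)⁻¹ * (τ / Real.sqrt (1 - k ^ 2)) *
        Real.sqrt (Real.pi / (((1 - k ^ 2) + τ) / (2 * (1 - k ^ 2)))) *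
        Real.sqrt (Real.pi / (((1 + τ) ^ 2 - k ^ 2) / (2 * ((1 - k ^ 2) + τ)))))
      = (2 * Real.pi * Real.sqrt (1 - (1 / (1 + τ) * k) ^ 2))⁻¹ *
        ((Real.sqrt (1 + τ⁻¹))⁻¹ * (Real.sqrt (2 * Real.pi))⁻¹) ^ 2 := by
    have e1 : Real.sqrt (2 * Real.pi) = Real.sqrt 2 * Real.sqrt Real.pi :=
      Real.sqrt_mul (by norm_num) _
    have e2 : Real.sqrt (Real.pi / (((1 - k ^ 2) + τ) / (2 * (1 - k ^ 2))))
        = Real.sqrt Real.pi * (Real.sqrt 2 * Real.sqrt (1 - k ^ 2)) /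
            Real.sqrt ((1 - k ^ 2) + τ) := by
      rw [show Real.pi / (((1 - k ^ 2) + τ) / (2 * (1 - k ^ 2)))
          = Real.pi * (2 * (1 - k ^ 2)) / ((1 - k ^ 2) + τ) from by field_simp,
        Real.sqrt_div (by positivity), Real.sqrt_mul hπ.le, Real.sqrt_mul (by norm_num)]
    have e3 : Real.sqrt (Real.pi / (((1 + τ) ^ 2 - k ^ 2) / (2 * ((1 - k ^ 2) + τ))))
        = Real.sqrt Real.pi * (Real.sqrt 2 * Real.sqrt ((1 - k ^ 2) + τ)) /
            Real.sqrt ((1 + τ) ^ 2 - k ^ 2) := by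
      rw [show Real.pi / (((1 + τ) ^ 2 - k ^ 2) / (2 * ((1 - k ^ 2) + τ)))
          = Real.pi * (2 * ((1 - k ^ 2) + τ)) / ((1 + τ) ^ 2 - k ^ 2) from by field_simp,
        Real.sqrt_div (by positivity), Real.sqrt_mul hπ.le, Real.sqrt_mul (by norm_num)]
    have e4 : Real.sqrt (1 + τ⁻¹) = Real.sqrt (1 + τ) / Real.sqrt τ := by
      rw [show (1 : ℝ) + τ⁻¹ = (1 + τ) / τ from by field_simp; ring,
        Real.sqrt_div (by positivity)]
    have e5 : Real.sqrt (1 - (1 / (1 + τ) * k) ^ 2)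
        = Real.sqrt ((1 + τ) ^ 2 - k ^ 2) / (1 + τ) := by
      rw [show (1 : ℝ) - (1 / (1 + τ) * k) ^ 2 = ((1 + τ) ^ 2 - k ^ 2) / (1 + τ) ^ 2 from by
          field_simp,
        Real.sqrt_div (by positivity), Real.sqrt_sq h1τ.le]
    rw [e1, e2, e3, e4, e5]
    have n2 : Real.sqrt 2 ≠ 0 := by positivity
    have nπ : Real.sqrt Real.pi ≠ 0 := by positivity
    have nτ : Real.sqrt τ ≠ 0 := by positivity
    have n1τ : Real.sqrt (1 + τ) ≠ 0 := by positivity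
    have nd : Real.sqrt (1 - k ^ 2) ≠ 0 := by positivity
    have ndτ : Real.sqrt ((1 - k ^ 2) + τ) ≠ 0 := by positivity
    have nQ : Real.sqrt ((1 + τ) ^ 2 - k ^ 2) ≠ 0 := by positivity
    field_simp
    ring_nf
    rw [Real.sq_sqrt h1τ.le]
    ring_nf; rw [Real.sq_sqrt hτ.le]; ring
  -- the exponent identity
  have hE : ((y + τ * k * y₁ / ((1 - k ^ 2) + τ)) ^ 2 /
        (4 * (((1 + τ) ^ 2 - k ^ 2) / (2 * ((1 - k ^ 2) + τ)))) +
        (-y ^ 2 / 2 - τ * y₁ ^ 2 / (2 * ((1 - k ^ 2) + τ))) +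
        (-(y / Real.sqrt (1 + τ⁻¹)) ^ 2 / 2) + (-(y₁ / Real.sqrt (1 + τ⁻¹)) ^ 2 / 2))
      = (-((y / Real.sqrt (1 + τ⁻¹)) ^ 2 -
            2 * (1 / (1 + τ) * k) * (y / Real.sqrt (1 + τ⁻¹)) * (y₁ / Real.sqrt (1 + τ⁻¹)) +
            (y₁ / Real.sqrt (1 + τ⁻¹)) ^ 2) / (2 * (1 - (1 / (1 + τ) * k) ^ 2)) +
          (-(y / Real.sqrt (1 + τ⁻¹)) ^ 2 / 2) + (-(y₁ / Real.sqrt (1 + τ⁻¹)) ^ 2 / 2)) := by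
    have hy2 : (y / Real.sqrt (1 + τ⁻¹)) ^ 2 = y ^ 2 / (1 + τ⁻¹) := by
      rw [div_pow, Real.sq_sqrt hs.le]
    have hy12 : (y₁ / Real.sqrt (1 + τ⁻¹)) ^ 2 = y₁ ^ 2 / (1 + τ⁻¹) := by
      rw [div_pow, Real.sq_sqrt hs.le]
    have hcross : (y / Real.sqrt (1 + τ⁻¹)) * (y₁ / Real.sqrt (1 + τ⁻¹))
        = y * y₁ / (1 + τ⁻¹) := by
      rw [div_mul_div_comm, Real.mul_self_sqrt hs.le]
    rw [hy2, hy12, mul_assoc, mul_assoc, hcross]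
    have h1 : ((1 : ℝ) + τ) ≠ 0 := ne_of_gt h1τ
    have h2 : ((1 - k ^ 2) + τ) ≠ 0 := ne_of_gt hdτ
    have h3 : ((1 + τ) ^ 2 - k ^ 2) ≠ 0 := ne_of_gt hQ
    have h4 : ((1 : ℝ) + τ⁻¹) ≠ 0 := ne_of_gt hs
    have h5 : ((1 : ℝ) - (1 / (1 + τ) * k) ^ 2) ≠ 0 := ne_of_gt hρ
    have h6 : τ ≠ 0 := ne_of_gt hτ
    field_simp
    ring
  -- put both sides into the form `C * exp E` and conclude
  unfold stdNormalPDF biNormalPDF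
  trans (((Real.sqrt (2 * Real.pi))⁻¹ ^ 4 * (2 * Real.pi)⁻¹ * (τ / Real.sqrt (1 - k ^ 2)) *
      Real.sqrt (Real.pi / (((1 - k ^ 2) + τ) / (2 * (1 - k ^ 2)))) *
      Real.sqrt (Real.pi / (((1 + τ) ^ 2 - k ^ 2) / (2 * ((1 - k ^ 2) + τ))))) *
    Real.exp ((y + τ * k * y₁ / ((1 - k ^ 2) + τ)) ^ 2 /
        (4 * (((1 + τ) ^ 2 - k ^ 2) / (2 * ((1 - k ^ 2) + τ)))) +
      (-y ^ 2 / 2 - τ * y₁ ^ 2 / (2 * ((1 - k ^ 2) + τ))) +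
      (-(y / Real.sqrt (1 + τ⁻¹)) ^ 2 / 2) + (-(y₁ / Real.sqrt (1 + τ⁻¹)) ^ 2 / 2)))
  · simp only [Real.exp_add]
    ring
  · rw [hC, hE]
    simp only [Real.exp_add]
    ring
end

section
/- Let (Ω, ℱ, P) be a probability space, let (w_k)_{k∈ℕ} be a sequence of nonnegative real random variables with Σ_{k} w_k = 1 almost surely, and let (θ_k)_{k∈ℕ} be a sequence of independent, identically distributed random variables with values in a measurable space Θ, with the sequence (θ_k) independent of the sequence (w_k). Let g, h : Θ → ℝ be bounded measurable functions. Then E[ Σ_{j} Σ_{k} w_j·w_k·g(θ_j)·h(θ_k) ] = (1 − E[Σ_k w_k²])·E[g(θ₁)]·E[h(θ₁)] + E[Σ_k w_k²]·E[g(θ₁)·h(θ₁)]. -/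
open MeasureTheory ProbabilityTheory
open scoped ENNReal

/-- the stick-breaking cross-moment decomposition. If `(w k)` are
nonnegative random weights summing to one a.s., `(θ k)` is an i.i.d. sequence
independent of the weights, and `g, h` are bounded measurable, then
`E[∑ⱼ∑ₖ wⱼ wₖ g(θⱼ) h(θₖ)]
  = (1 − E[∑ₖ wₖ²])·E[g(θ₀)]·E[h(θ₀)] + E[∑ₖ wₖ²]·E[g(θ₀)h(θ₀)]`. -/
theorem stick_breaking_cross_moment
    {Ω : Type*} [MeasurableSpace Ω] (P : Measure Ω) [IsProbabilityMeasure P]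
    {Θ : Type*} [MeasurableSpace Θ]
    (w : ℕ → Ω → ℝ) (hw_meas : ∀ k, Measurable (w k))
    (hw_nonneg : ∀ k ω, 0 ≤ w k ω)
    (hw_sum : ∀ᵐ ω ∂P, ∑' k, w k ω = 1)
    (θ : ℕ → Ω → Θ) (hθ_meas : ∀ k, Measurable (θ k))
    (hθ_indep : iIndepFun θ P)
    (hθ_ident : ∀ k, IdentDistrib (θ k) (θ 0) P P)
    (h_wθ_indep : IndepFun (fun ω (k : ℕ) => w k ω) (fun ω (k : ℕ) => θ k ω) P)
    (g h : Θ → ℝ) (hg_meas : Measurable g) (hh_meas : Measurable h)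
    (hg_bdd : ∃ C, ∀ t, |g t| ≤ C) (hh_bdd : ∃ C, ∀ t, |h t| ≤ C) :
    ∫ ω, (∑' j, ∑' k, w j ω * w k ω * g (θ j ω) * h (θ k ω)) ∂P =
      (1 - ∫ ω, (∑' k, (w k ω) ^ 2) ∂P) * (∫ ω, g (θ 0 ω) ∂P) * (∫ ω, h (θ 0 ω) ∂P) +
        (∫ ω, (∑' k, (w k ω) ^ 2) ∂P) * ∫ ω, g (θ 0 ω) * h (θ 0 ω) ∂P := by
  classical
  obtain ⟨Cg₀, hCg₀⟩ := hg_bdd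
  obtain ⟨Ch₀, hCh₀⟩ := hh_bdd
  set Cg : ℝ := max Cg₀ 0 with hCgdef
  set Ch : ℝ := max Ch₀ 0 with hChdef
  have hCg : ∀ t, |g t| ≤ Cg := fun t => (hCg₀ t).trans (le_max_left _ _)
  have hCh : ∀ t, |h t| ≤ Ch := fun t => (hCh₀ t).trans (le_max_left _ _)
  have hCg0 : (0:ℝ) ≤ Cg := le_max_right _ _
  have hCh0 : (0:ℝ) ≤ Ch := le_max_right _ _
  -- pointwise facts on the good set
  have hgood : ∀ᵐ ω ∂P, Summable (fun k => w k ω) ∧ (∀ k, w k ω ≤ 1)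
      ∧ ∑' k, w k ω = 1 := by
    filter_upwards [hw_sum] with ω hω
    have hsumm : Summable (fun k => w k ω) := by
      by_contra hns
      rw [tsum_eq_zero_of_not_summable hns] at hω
      norm_num at hω
    refine ⟨hsumm, fun k => ?_, hω⟩
    calc w k ω ≤ ∑' j, w j ω := Summable.le_tsum hsumm k (fun j _ => hw_nonneg j ω)
    _ = 1 := hω
  -- abbreviation
  set F : ℕ → ℕ → Ω → ℝ := fun j k ω => w j ω * w k ω * g (θ j ω) * h (θ k ω) with hF
  have hF_meas : ∀ j k, Measurable (F j k) := fun j k =>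
    (((hw_meas j).mul (hw_meas k)).mul (hg_meas.comp (hθ_meas j))).mul
      (hh_meas.comp (hθ_meas k))
  have hF_bound : ∀ j k ω, |F j k ω| ≤ Cg * Ch * (w j ω * w k ω) := by
    intro j k ω
    have h1 : |F j k ω| = w j ω * w k ω * |g (θ j ω)| * |h (θ k ω)| := by
      rw [abs_mul, abs_mul, abs_mul, abs_of_nonneg (hw_nonneg j ω),
        abs_of_nonneg (hw_nonneg k ω)]
    rw [h1]
    calc w j ω * w k ω * |g (θ j ω)| * |h (θ k ω)|
        ≤ w j ω * w k ω * Cg * Ch :=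
          mul_le_mul (mul_le_mul_of_nonneg_left (hCg _) (mul_nonneg (hw_nonneg j ω) (hw_nonneg k ω))) (hCh _) (abs_nonneg _)
            (mul_nonneg (mul_nonneg (hw_nonneg j ω) (hw_nonneg k ω)) hCg0)
      _ = Cg * Ch * (w j ω * w k ω) := by ring
  -- integrability
  have hww_le1 : ∀ᵐ ω ∂P, ∀ j k : ℕ, w j ω * w k ω ≤ 1 := by
    filter_upwards [hgood] with ω hω
    intro j k
    calc w j ω * w k ω ≤ 1 * 1 := mul_le_mul (hω.2.1 j) (hω.2.1 k) (hw_nonneg k ω) zero_le_one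
      _ = 1 := one_mul 1
  have hww_int : ∀ j k : ℕ, Integrable (fun ω => w j ω * w k ω) P := by
    intro j k
    refine ⟨((hw_meas j).mul (hw_meas k)).aestronglyMeasurable, ?_⟩
    apply HasFiniteIntegral.of_bounded (C := 1)
    filter_upwards [hww_le1] with ω hω
    rw [Real.norm_eq_abs, abs_of_nonneg (mul_nonneg (hw_nonneg j ω) (hw_nonneg k ω))]
    exact hω j k
  have hF_int : ∀ j k : ℕ, Integrable (F j k) P := by
    intro j k
    refine ⟨(hF_meas j k).aestronglyMeasurable, ?_⟩
    apply HasFiniteIntegral.of_bounded (C := Cg * Ch)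
    filter_upwards [hww_le1] with ω hω
    rw [Real.norm_eq_abs]
    calc |F j k ω| ≤ Cg * Ch * (w j ω * w k ω) := hF_bound j k ω
      _ ≤ Cg * Ch * 1 := mul_le_mul_of_nonneg_left (hω j k) (mul_nonneg hCg0 hCh0)
      _ = Cg * Ch := mul_one _
  -- lintegral facts
  have hofReal_meas : ∀ k : ℕ, Measurable (fun ω => ENNReal.ofReal (w k ω)) := fun k =>
    ENNReal.measurable_ofReal.comp (hw_meas k)
  have htsum_one : ∫⁻ ω, (∑' k, ENNReal.ofReal (w k ω)) ∂P = 1 := by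
    have hcongr : ∀ᵐ ω ∂P, (∑' k, ENNReal.ofReal (w k ω)) = 1 := by
      filter_upwards [hgood] with ω ⟨hs, _, hω⟩
      rw [← ENNReal.ofReal_tsum_of_nonneg (fun k => hw_nonneg k ω) hs, hω, ENNReal.ofReal_one]
    rw [lintegral_congr_ae hcongr, lintegral_one, measure_univ]
  have hlint_key : ∑' p : ℕ × ℕ, ∫⁻ ω, ENNReal.ofReal (w p.1 ω) * ENNReal.ofReal (w p.2 ω) ∂P
      = 1 := by
    rw [← lintegral_tsum (f := fun (p : ℕ × ℕ) ω => ENNReal.ofReal (w p.1 ω) * ENNReal.ofReal (w p.2 ω))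
      (fun p => ((hofReal_meas p.1).mul (hofReal_meas p.2)).aemeasurable)]
    have hcongr : ∀ᵐ ω ∂P,
        (∑' p : ℕ × ℕ, ENNReal.ofReal (w p.1 ω) * ENNReal.ofReal (w p.2 ω)) = 1 := by
      filter_upwards [hgood] with ω ⟨hs, _, hω⟩
      have h1 : (∑' k, ENNReal.ofReal (w k ω)) = 1 := by
        rw [← ENNReal.ofReal_tsum_of_nonneg (fun k => hw_nonneg k ω) hs, hω, ENNReal.ofReal_one]
      calc (∑' p : ℕ × ℕ, ENNReal.ofReal (w p.1 ω) * ENNReal.ofReal (w p.2 ω))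
          = ∑' (a : ℕ) (b : ℕ), ENNReal.ofReal (w a ω) * ENNReal.ofReal (w b ω) :=
            ENNReal.tsum_prod (f := fun a b => ENNReal.ofReal (w a ω) * ENNReal.ofReal (w b ω))
        _ = ∑' (a : ℕ), ENNReal.ofReal (w a ω) * ∑' (b : ℕ), ENNReal.ofReal (w b ω) := by
            exact tsum_congr fun a => ENNReal.tsum_mul_left
        _ = 1 := by rw [h1]; simpa using h1
    rw [lintegral_congr_ae hcongr, lintegral_one, measure_univ]
  have hlint_bound : ∀ (c : ℝ), 0 ≤ c → ∀ (φ : ℕ × ℕ → Ω → ℝ),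
      (∀ p ω, |φ p ω| ≤ c * (w p.1 ω * w p.2 ω)) →
      (∑' p : ℕ × ℕ, ∫⁻ ω, ‖φ p ω‖₊ ∂P) ≠ ∞ := by
    intro c hc φ hb
    have hle : ∀ p : ℕ × ℕ, ∫⁻ ω, ‖φ p ω‖₊ ∂P ≤
        ENNReal.ofReal c * ∫⁻ ω, ENNReal.ofReal (w p.1 ω) * ENNReal.ofReal (w p.2 ω) ∂P := by
      intro p
      rw [← lintegral_const_mul (f := fun ω => ENNReal.ofReal (w p.1 ω) * ENNReal.ofReal (w p.2 ω))
        _ ((hofReal_meas p.1).mul (hofReal_meas p.2))]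
      apply lintegral_mono
      intro ω
      calc (‖φ p ω‖₊ : ℝ≥0∞) = ENNReal.ofReal |φ p ω| := Real.enorm_eq_ofReal_abs _
        _ ≤ ENNReal.ofReal (c * (w p.1 ω * w p.2 ω)) := ENNReal.ofReal_le_ofReal (hb p ω)
        _ = ENNReal.ofReal c * (ENNReal.ofReal (w p.1 ω) * ENNReal.ofReal (w p.2 ω)) := by
            rw [ENNReal.ofReal_mul hc, ENNReal.ofReal_mul (hw_nonneg _ _)]
    have hfin : (∑' p : ℕ × ℕ, ∫⁻ ω, ‖φ p ω‖₊ ∂P) ≤ ENNReal.ofReal c := by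
      calc (∑' p : ℕ × ℕ, ∫⁻ ω, ‖φ p ω‖₊ ∂P)
          ≤ ∑' p : ℕ × ℕ, ENNReal.ofReal c *
              ∫⁻ ω, ENNReal.ofReal (w p.1 ω) * ENNReal.ofReal (w p.2 ω) ∂P :=
            ENNReal.tsum_le_tsum hle
        _ = ENNReal.ofReal c * ∑' p : ℕ × ℕ,
              ∫⁻ ω, ENNReal.ofReal (w p.1 ω) * ENNReal.ofReal (w p.2 ω) ∂P :=
            ENNReal.tsum_mul_left
        _ = ENNReal.ofReal c := by rw [hlint_key, mul_one]
    exact ne_top_of_le_ne_top ENNReal.ofReal_ne_top hfin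
  -- swap integral and double sum
  have hswap : ∫ ω, (∑' j, ∑' k, F j k ω) ∂P = ∑' p : ℕ × ℕ, ∫ ω, F p.1 p.2 ω ∂P := by
    have h1 : ∫ ω, (∑' j, ∑' k, F j k ω) ∂P = ∫ ω, (∑' p : ℕ × ℕ, F p.1 p.2 ω) ∂P := by
      apply integral_congr_ae
      filter_upwards [hgood] with ω ⟨hs, hle, hω⟩
      have hsp : Summable (fun p : ℕ × ℕ => w p.1 ω * w p.2 ω) :=
        hs.mul_of_nonneg hs (fun j => hw_nonneg j ω) (fun k => hw_nonneg k ω)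
      have habs : Summable (fun p : ℕ × ℕ => |F p.1 p.2 ω|) :=
        Summable.of_nonneg_of_le (fun p => abs_nonneg _) (fun p => hF_bound p.1 p.2 ω)
          (hsp.mul_left (Cg * Ch))
      exact (Summable.tsum_prod (summable_abs_iff.mp habs)).symm
    rw [h1]
    exact integral_tsum (fun p => (hF_meas p.1 p.2).aestronglyMeasurable)
      (hlint_bound (Cg * Ch) (mul_nonneg hCg0 hCh0) _ (fun p ω => hF_bound p.1 p.2 ω))
  -- independence computations
  have hww_gh : ∀ j k : ℕ, ∫ ω, F j k ω ∂P =
      (∫ ω, w j ω * w k ω ∂P) * ∫ ω, g (θ j ω) * h (θ k ω) ∂P := by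
    intro j k
    have hφ : Measurable fun v : ℕ → ℝ => v j * v k :=
      (measurable_pi_apply j).mul (measurable_pi_apply k)
    have hψ : Measurable fun t : ℕ → Θ => g (t j) * h (t k) :=
      (hg_meas.comp (measurable_pi_apply j)).mul (hh_meas.comp (measurable_pi_apply k))
    have hind : IndepFun (fun ω => w j ω * w k ω) (fun ω => g (θ j ω) * h (θ k ω)) P :=
      h_wθ_indep.comp hφ hψ
    have h2 : ∫ ω, (w j ω * w k ω) * (g (θ j ω) * h (θ k ω)) ∂P =
        (∫ ω, w j ω * w k ω ∂P) * ∫ ω, g (θ j ω) * h (θ k ω) ∂P :=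
      hind.integral_fun_mul_eq_mul_integral (((hw_meas j).mul (hw_meas k)).aestronglyMeasurable)
        (((hg_meas.comp (hθ_meas j)).mul (hh_meas.comp (hθ_meas k))).aestronglyMeasurable)
    rw [← h2]
    congr 1
    ext ω
    show w j ω * w k ω * g (θ j ω) * h (θ k ω) = _
    ring
  set A : ℝ := (∫ ω, g (θ 0 ω) ∂P) * ∫ ω, h (θ 0 ω) ∂P with hAdef
  set B : ℝ := ∫ ω, g (θ 0 ω) * h (θ 0 ω) ∂P with hBdef
  have hA : ∀ j k : ℕ, j ≠ k → ∫ ω, g (θ j ω) * h (θ k ω) ∂P = A := by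
    intro j k hjk
    have hind : IndepFun (fun ω => g (θ j ω)) (fun ω => h (θ k ω)) P :=
      (hθ_indep.indepFun hjk).comp hg_meas hh_meas
    have h1 : ∫ ω, g (θ j ω) * h (θ k ω) ∂P =
        (∫ ω, g (θ j ω) ∂P) * ∫ ω, h (θ k ω) ∂P :=
      hind.integral_fun_mul_eq_mul_integral ((hg_meas.comp (hθ_meas j)).aestronglyMeasurable)
        ((hh_meas.comp (hθ_meas k)).aestronglyMeasurable)
    have e1 : ∫ ω, g (θ j ω) ∂P = ∫ ω, g (θ 0 ω) ∂P :=
      ((hθ_ident j).comp hg_meas).integral_eq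
    have e2 : ∫ ω, h (θ k ω) ∂P = ∫ ω, h (θ 0 ω) ∂P :=
      ((hθ_ident k).comp hh_meas).integral_eq
    rw [h1, e1, e2]
  have hB : ∀ j : ℕ, ∫ ω, g (θ j ω) * h (θ j ω) ∂P = B := fun j =>
    ((hθ_ident j).comp (hg_meas.mul hh_meas)).integral_eq
  -- pointwise a.e. value of the double weight sum
  have htsum_ww : ∀ᵐ ω ∂P, Summable (fun p : ℕ × ℕ => w p.1 ω * w p.2 ω) ∧
      (∑' p : ℕ × ℕ, w p.1 ω * w p.2 ω) = 1 := by
    filter_upwards [hgood] with ω ⟨hs, hle, hω⟩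
    have hsp : Summable (fun p : ℕ × ℕ => w p.1 ω * w p.2 ω) :=
      hs.mul_of_nonneg hs (fun j => hw_nonneg j ω) (fun k => hw_nonneg k ω)
    refine ⟨hsp, ?_⟩
    rw [Summable.tsum_prod hsp]
    have hinner : ∀ j : ℕ, (∑' k, w j ω * w k ω) = w j ω := by
      intro j; rw [tsum_mul_left, hω, mul_one]
    calc (∑' (j : ℕ) (k : ℕ), w j ω * w k ω) = ∑' j, w j ω := tsum_congr hinner
      _ = 1 := hω
  -- summability and value of the double sum of expectations
  have hm_nonneg : ∀ p : ℕ × ℕ, (0:ℝ) ≤ ∫ ω, w p.1 ω * w p.2 ω ∂P := fun p =>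
    integral_nonneg fun ω => mul_nonneg (hw_nonneg _ ω) (hw_nonneg _ ω)
  have hm_finsum : ∀ u : Finset (ℕ × ℕ), (∑ p ∈ u, ∫ ω, w p.1 ω * w p.2 ω ∂P) ≤ 1 := by
    intro u
    rw [← integral_finset_sum u (fun p _ => hww_int p.1 p.2)]
    calc ∫ ω, ∑ p ∈ u, w p.1 ω * w p.2 ω ∂P ≤ ∫ _, (1:ℝ) ∂P := by
          apply integral_mono_ae (integrable_finset_sum u fun p _ => hww_int p.1 p.2)
            (integrable_const 1)
          filter_upwards [htsum_ww] with ω ⟨hsp, hval⟩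
          calc (∑ p ∈ u, w p.1 ω * w p.2 ω) ≤ ∑' p : ℕ × ℕ, w p.1 ω * w p.2 ω :=
              Summable.sum_le_tsum u (fun p _ => mul_nonneg (hw_nonneg _ ω) (hw_nonneg _ ω)) hsp
            _ = 1 := hval
      _ = 1 := by simp
  have hm_summable : Summable (fun p : ℕ × ℕ => ∫ ω, w p.1 ω * w p.2 ω ∂P) :=
    summable_of_sum_le hm_nonneg hm_finsum
  have hm_tsum : (∑' p : ℕ × ℕ, ∫ ω, w p.1 ω * w p.2 ω ∂P) = 1 := by
    rw [← integral_tsum (fun p => (((hw_meas p.1).mul (hw_meas p.2)).aestronglyMeasurable :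
        AEStronglyMeasurable (fun ω => w p.1 ω * w p.2 ω) P))
      (hlint_bound 1 zero_le_one _ (fun p ω => by
        rw [one_mul, abs_of_nonneg (mul_nonneg (hw_nonneg _ ω) (hw_nonneg _ ω))]))]
    calc ∫ ω, (∑' p : ℕ × ℕ, w p.1 ω * w p.2 ω) ∂P = ∫ _, (1:ℝ) ∂P := by
          apply integral_congr_ae
          filter_upwards [htsum_ww] with ω hval
          exact hval.2
      _ = 1 := by simp
  -- the diagonal sum
  have hsq_int : ∀ k : ℕ, Integrable (fun ω => (w k ω) ^ 2) P := by
    intro k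
    have := hww_int k k
    simpa only [← pow_two] using this
  have hdiag_tsum : (∑' k : ℕ, ∫ ω, (w k ω) ^ 2 ∂P) = ∫ ω, (∑' k, (w k ω) ^ 2) ∂P := by
    refine (integral_tsum (fun k => ((hw_meas k).pow_const 2).aestronglyMeasurable) ?_).symm
    have hle : ∀ k : ℕ, ∫⁻ ω, ‖(w k ω) ^ 2‖₊ ∂P ≤ ∫⁻ ω, ENNReal.ofReal (w k ω) ∂P := by
      intro k
      apply lintegral_mono_ae
      filter_upwards [hgood] with ω ⟨_, hle1, _⟩
      rw [← enorm_eq_nnnorm, Real.enorm_eq_ofReal_abs]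
      apply ENNReal.ofReal_le_ofReal
      rw [abs_of_nonneg (sq_nonneg _)]
      calc (w k ω) ^ 2 = w k ω * w k ω := sq _
        _ ≤ 1 * w k ω := mul_le_mul_of_nonneg_right (hle1 k) (hw_nonneg k ω)
        _ = w k ω := one_mul _
    have hfin : (∑' k : ℕ, ∫⁻ ω, ‖(w k ω) ^ 2‖₊ ∂P) ≤ 1 := by
      calc (∑' k : ℕ, ∫⁻ ω, ‖(w k ω) ^ 2‖₊ ∂P)
          ≤ ∑' k : ℕ, ∫⁻ ω, ENNReal.ofReal (w k ω) ∂P := ENNReal.tsum_le_tsum hle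
        _ = ∫⁻ ω, (∑' k, ENNReal.ofReal (w k ω)) ∂P :=
            (lintegral_tsum (fun k => (hofReal_meas k).aemeasurable)).symm
        _ = 1 := htsum_one
    exact ne_top_of_le_ne_top ENNReal.one_ne_top hfin
  have hdiag_summable : Summable (fun k : ℕ => ∫ ω, (w k ω) ^ 2 ∂P) := by
    apply summable_of_sum_le (fun k => integral_nonneg fun ω => sq_nonneg _)
    intro u
    rw [← integral_finset_sum u (fun k _ => hsq_int k)]
    calc ∫ ω, ∑ k ∈ u, (w k ω) ^ 2 ∂P ≤ ∫ _, (1:ℝ) ∂P := by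
          apply integral_mono_ae (integrable_finset_sum u fun k _ => hsq_int k)
            (integrable_const 1)
          filter_upwards [hgood] with ω ⟨hs, hle1, hω⟩
          calc (∑ k ∈ u, (w k ω) ^ 2) ≤ ∑ k ∈ u, w k ω := by
                apply Finset.sum_le_sum
                intro k _
                calc (w k ω) ^ 2 = w k ω * w k ω := sq _
                  _ ≤ 1 * w k ω := mul_le_mul_of_nonneg_right (hle1 k) (hw_nonneg k ω)
                  _ = w k ω := one_mul _
            _ ≤ ∑' k, w k ω := Summable.sum_le_tsum u (fun k _ => hw_nonneg k ω) hs
            _ = 1 := hω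
      _ = 1 := by simp
  -- diagonal extraction
  set d : ℕ × ℕ → ℝ :=
    fun p => if p.1 = p.2 then ∫ ω, w p.1 ω * w p.2 ω ∂P else 0 with hddef
  have hd_diag : ∀ k : ℕ, d (k, k) = ∫ ω, (w k ω) ^ 2 ∂P := by
    intro k
    show (if (k = k) then ∫ ω, w k ω * w k ω ∂P else 0) = _
    rw [if_pos rfl]
    congr 1
    ext ω
    rw [sq]
  have hinj : Function.Injective (fun k : ℕ => ((k, k) : ℕ × ℕ)) := fun a b hab =>
    (Prod.ext_iff.mp hab).1
  have hd_zero : ∀ x : ℕ × ℕ, x ∉ Set.range (fun k : ℕ => ((k, k) : ℕ × ℕ)) → d x = 0 := by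
    intro x hx
    apply if_neg
    intro hh
    exact hx ⟨x.1, by obtain ⟨a, b⟩ := x; cases hh; rfl⟩
  have hd_summable : Summable d := by
    rw [← hinj.summable_iff hd_zero]
    have : (d ∘ fun k : ℕ => ((k, k) : ℕ × ℕ)) = fun k : ℕ => ∫ ω, (w k ω) ^ 2 ∂P :=
      funext fun k => hd_diag k
    rw [this]
    exact hdiag_summable
  have hd_tsum : (∑' p : ℕ × ℕ, d p) = ∫ ω, (∑' k, (w k ω) ^ 2) ∂P := by
    have hsupp : Function.support d ⊆ Set.range (fun k : ℕ => ((k, k) : ℕ × ℕ)) := by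
      intro x hx
      by_contra hr
      exact hx (hd_zero x hr)
    calc (∑' p : ℕ × ℕ, d p) = ∑' k : ℕ, d (k, k) := (hinj.tsum_eq hsupp).symm
      _ = ∑' k : ℕ, ∫ ω, (w k ω) ^ 2 ∂P := tsum_congr hd_diag
      _ = _ := hdiag_tsum
  -- value of each term
  have hFval : ∀ p : ℕ × ℕ, ∫ ω, F p.1 p.2 ω ∂P =
      A * (∫ ω, w p.1 ω * w p.2 ω ∂P) + (B - A) * d p := by
    intro p
    rcases eq_or_ne p.1 p.2 with hjk | hjk
    · have hd : d p = ∫ ω, w p.1 ω * w p.2 ω ∂P := if_pos hjk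
      rw [hd, hww_gh p.1 p.2]
      rw [show ∫ ω, g (θ p.1 ω) * h (θ p.2 ω) ∂P = B by rw [hjk]; exact hB p.2]
      ring
    · have hd : d p = 0 := if_neg hjk
      rw [hd, hww_gh p.1 p.2, hA p.1 p.2 hjk]
      ring
  -- final assembly
  calc ∫ ω, (∑' j, ∑' k, w j ω * w k ω * g (θ j ω) * h (θ k ω)) ∂P
      = ∑' p : ℕ × ℕ, ∫ ω, F p.1 p.2 ω ∂P := hswap
    _ = ∑' p : ℕ × ℕ, (A * (∫ ω, w p.1 ω * w p.2 ω ∂P) + (B - A) * d p) := tsum_congr hFval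
    _ = A * (∑' p : ℕ × ℕ, ∫ ω, w p.1 ω * w p.2 ω ∂P) + (B - A) * ∑' p : ℕ × ℕ, d p := by
        rw [Summable.tsum_add (hm_summable.mul_left A) (hd_summable.mul_left (B - A)),
          tsum_mul_left, tsum_mul_left]
    _ = A * 1 + (B - A) * ∫ ω, (∑' k, (w k ω) ^ 2) ∂P := by rw [hm_tsum, hd_tsum]
    _ = (1 - ∫ ω, (∑' k, (w k ω) ^ 2) ∂P) * (∫ ω, g (θ 0 ω) ∂P) * (∫ ω, h (θ 0 ω) ∂P) +
        (∫ ω, (∑' k, (w k ω) ^ 2) ∂P) * ∫ ω, g (θ 0 ω) * h (θ 0 ω) ∂P := by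
        rw [hAdef, hBdef]; ring
end

section
/- Let p : ℝ → [0,∞) be a probability density with CDF P, and suppose z : ℝ → ℝ is a measurable function with Φ(z(x)) = P(x) for Lebesgue-almost every x with p(x) > 0. Then for every α ∈ [0,1], ρ ∈ (−1,1), and w ∈ ℝ, the function x ↦ [1 − α + α·φ₂(z(x), w; ρ)/(φ(z(x))·φ(w))]·p(x) is nonnegative and integrates to 1 over ℝ; that is, the copula update p_i(x) = [1 − α + α·c(P(x), Φ(w); ρ)]·p(x) is again a probability density. -/
open MeasureTheory

/-- `Φ`, the standard normal CDF. -/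
noncomputable def stdNormalCDF (z : ℝ) : ℝ := ∫ t in Set.Iic z, stdNormalPDF t

section Aux

open Real Filter

lemma stdNormalPDF_eq : stdNormalPDF = ProbabilityTheory.gaussianPDFReal 0 1 := by
  ext t
  simp [stdNormalPDF, ProbabilityTheory.gaussianPDFReal]

lemma stdNormalPDF_pos (t : ℝ) : 0 < stdNormalPDF t := by
  rw [stdNormalPDF_eq]
  exact ProbabilityTheory.gaussianPDFReal_pos 0 1 t one_ne_zero

lemma integrable_stdNormalPDF : Integrable stdNormalPDF := by
  rw [stdNormalPDF_eq]; exact ProbabilityTheory.integrable_gaussianPDFReal 0 1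

lemma integral_stdNormalPDF : ∫ t, stdNormalPDF t = 1 := by
  rw [stdNormalPDF_eq]; exact ProbabilityTheory.integral_gaussianPDFReal_eq_one 0 one_ne_zero

lemma measurable_stdNormalPDF : Measurable stdNormalPDF := by
  rw [stdNormalPDF_eq]; exact ProbabilityTheory.measurable_gaussianPDFReal 0 1

lemma biNormalPDF_nonneg (t w ρ : ℝ) : 0 ≤ biNormalPDF t w ρ := by
  rw [biNormalPDF]
  have h : (0:ℝ) ≤ (2 * π * Real.sqrt (1 - ρ ^ 2))⁻¹ := by positivity
  exact mul_nonneg h (Real.exp_pos _).le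

lemma biNormalPDF_eq (w ρ : ℝ) (hρ : ρ ∈ Set.Ioo (-1:ℝ) 1) (t : ℝ) :
    biNormalPDF t w ρ = stdNormalPDF w *
      ProbabilityTheory.gaussianPDFReal (ρ * w) ⟨1 - ρ^2, by nlinarith [hρ.1, hρ.2]⟩ t := by
  have hs : (0:ℝ) < 1 - ρ^2 := by nlinarith [hρ.1, hρ.2]
  have h2π : (0:ℝ) < 2 * π := by positivity
  rw [biNormalPDF, stdNormalPDF]; unfold ProbabilityTheory.gaussianPDFReal
  change _ = _ * ((√(2 * π * (1 - ρ^2)))⁻¹ * Real.exp (-(t - ρ * w) ^ 2 / (2 * (1 - ρ^2))))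
  rw [mul_mul_mul_comm]
  congr 1
  · rw [← mul_inv, ← Real.sqrt_mul h2π.le]
    push_cast
    rw [show 2*π*(2*π*(1-ρ^2)) = (2*π)^2 * (1-ρ^2) by ring, Real.sqrt_mul (by positivity),
      Real.sqrt_sq h2π.le]
  · rw [← Real.exp_add]
    congr 1
    push_cast
    field_simp
    ring

lemma stdNormalCDF_strictMono : StrictMono stdNormalCDF := by
  intro a b hab
  have h1 : stdNormalCDF b = stdNormalCDF a + ∫ t in Set.Ioc a b, stdNormalPDF t := by
    rw [stdNormalCDF, stdNormalCDF, ← Set.Iic_union_Ioc_eq_Iic hab.le,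
      setIntegral_union (Set.Iic_disjoint_Ioc le_rfl) measurableSet_Ioc
        integrable_stdNormalPDF.integrableOn integrable_stdNormalPDF.integrableOn]
  have h2 : 0 < ∫ t in Set.Ioc a b, stdNormalPDF t := by
    rw [← intervalIntegral.integral_of_le hab.le]
    exact intervalIntegral.intervalIntegral_pos_of_pos_on
      integrable_stdNormalPDF.intervalIntegrable
      (fun x _ => stdNormalPDF_pos x) hab
  linarith

lemma stdNormalCDF_pos (t : ℝ) : 0 < stdNormalCDF t := by
  rw [stdNormalCDF, setIntegral_pos_iff_support_of_nonneg_ae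
    (ae_of_all _ fun x => (stdNormalPDF_pos x).le) integrable_stdNormalPDF.integrableOn]
  have : Function.support stdNormalPDF = Set.univ := by
    ext x; simp [(stdNormalPDF_pos x).ne']
  rw [this, Set.univ_inter]
  simp

lemma stdNormalCDF_lt_one (t : ℝ) : stdNormalCDF t < 1 := by
  have h1 : stdNormalCDF t + ∫ s in Set.Ioi t, stdNormalPDF s = 1 := by
    rw [stdNormalCDF, ← setIntegral_union (Set.Iic_disjoint_Ioi le_rfl) measurableSet_Ioi
      integrable_stdNormalPDF.integrableOn integrable_stdNormalPDF.integrableOn,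
      Set.Iic_union_Ioi, setIntegral_univ, integral_stdNormalPDF]
  have h2 : 0 < ∫ s in Set.Ioi t, stdNormalPDF s := by
    rw [setIntegral_pos_iff_support_of_nonneg_ae
      (ae_of_all _ fun x => (stdNormalPDF_pos x).le) integrable_stdNormalPDF.integrableOn]
    have : Function.support stdNormalPDF = Set.univ := by
      ext x; simp [(stdNormalPDF_pos x).ne']
    rw [this, Set.univ_inter]
    simp
  linarith

lemma pit (p : ℝ → ℝ) (hp_nonneg : ∀ x, 0 ≤ p x)
    (hp_int : Integrable p) (hp_one : ∫ x, p x = 1)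
    {u : ℝ} (hu0 : 0 < u) (hu1 : u < 1) :
    volume.withDensity (fun x => ENNReal.ofReal (p x))
      {x | (∫ t in Set.Iic x, p t) ≤ u} = ENNReal.ofReal u := by
  set F : ℝ → ℝ := fun x => ∫ t in Set.Iic x, p t with hF
  set μ := volume.withDensity (fun x => ENNReal.ofReal (p x)) with hμ
  have hFmono : Monotone F := by
    intro a b hab
    exact setIntegral_mono_set hp_int.integrableOn
      (ae_of_all _ fun t => hp_nonneg t) (HasSubset.Subset.eventuallyLE (Set.Iic_subset_Iic.2 hab))
  have hFcont : Continuous F := by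
    have heq : ∀ x, F x = F 0 + ∫ t in (0:ℝ)..x, p t := by
      intro x
      rw [hF]
      have := intervalIntegral.integral_Iic_sub_Iic hp_int.integrableOn hp_int.integrableOn
        (a := 0) (b := x)
      simp only at this ⊢
      linarith
    have : Continuous fun x => F 0 + ∫ t in (0:ℝ)..x, p t :=
      continuous_const.add
        (intervalIntegral.continuous_primitive (fun a b => hp_int.intervalIntegrable) 0)
    exact this.congr fun x => (heq x).symm
  have hμIic : ∀ x, μ (Set.Iic x) = ENNReal.ofReal (F x) := by
    intro x
    rw [hμ, withDensity_apply _ measurableSet_Iic]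
    exact (ofReal_integral_eq_lintegral_ofReal hp_int.integrableOn
      (ae_of_all _ fun t => hp_nonneg t)).symm
  -- `{F ≤ u}` is nonempty
  have htend0 : Tendsto (fun n : ℕ => F (-n)) atTop (nhds 0) := by
    have h := MeasureTheory.tendsto_setIntegral_of_antitone (f := p) (μ := volume)
      (s := fun n : ℕ => Set.Iic (-(n:ℝ)))
      (fun n => measurableSet_Iic)
      (fun m n hmn => Set.Iic_subset_Iic.2 (neg_le_neg (Nat.cast_le.2 hmn)))
      ⟨0, hp_int.integrableOn⟩
    have hempty : ⋂ n : ℕ, Set.Iic (-(n:ℝ)) = ∅ := by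
      ext x
      simp only [Set.mem_iInter, Set.mem_Iic, Set.mem_empty_iff_false, iff_false, not_forall,
        not_le]
      obtain ⟨n, hn⟩ := exists_nat_gt (-x)
      exact ⟨n, by linarith⟩
    rw [hempty] at h
    simpa using h
  obtain ⟨n₀, hn₀⟩ : ∃ n : ℕ, F (-n) < u := (htend0.eventually (eventually_lt_nhds hu0)).exists
  have hSne : Set.Nonempty {x | F x ≤ u} := ⟨-n₀, hn₀.le⟩
  -- `{F ≤ u}` is bounded above
  have htend1 : Tendsto (fun n : ℕ => F (n:ℝ)) atTop (nhds 1) := by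
    have h := MeasureTheory.tendsto_setIntegral_of_monotone (f := p) (μ := volume)
      (s := fun n : ℕ => Set.Iic (n:ℝ))
      (fun n => measurableSet_Iic)
      (fun m n hmn => Set.Iic_subset_Iic.2 (Nat.cast_le.2 hmn))
      (by rw [show (⋃ n : ℕ, Set.Iic ((n:ℝ))) = Set.univ from ?_]
          · exact hp_int.integrableOn
          · ext x
            simp only [Set.mem_iUnion, Set.mem_Iic, Set.mem_univ, iff_true]
            obtain ⟨n, hn⟩ := exists_nat_gt x
            exact ⟨n, hn.le⟩)
    rw [show (⋃ n : ℕ, Set.Iic ((n:ℝ))) = Set.univ from ?_] at h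
    · rw [setIntegral_univ, hp_one] at h
      exact h
    · ext x
      simp only [Set.mem_iUnion, Set.mem_Iic, Set.mem_univ, iff_true]
      obtain ⟨n, hn⟩ := exists_nat_gt x
      exact ⟨n, hn.le⟩
  obtain ⟨n₁, hn₁⟩ : ∃ n : ℕ, u < F n := (htend1.eventually (eventually_gt_nhds hu1)).exists
  have hSbdd : BddAbove {x | F x ≤ u} := by
    refine ⟨n₁, fun y hy => ?_⟩
    by_contra hlt
    push_neg at hlt
    exact absurd (le_trans (hFmono hlt.le) hy) (not_le.2 hn₁)
  have hSclosed : IsClosed {x | F x ≤ u} := isClosed_le hFcont continuous_const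
  set a := sSup {x | F x ≤ u} with ha
  have haS : a ∈ {x | F x ≤ u} := hSclosed.csSup_mem hSne hSbdd
  have hSeq : {x | F x ≤ u} = Set.Iic a := by
    ext x
    constructor
    · exact fun hx => le_csSup hSbdd hx
    · exact fun hx => le_trans (hFmono hx) haS
  have hFa : F a = u := by
    refine le_antisymm haS ?_
    by_contra hlt
    push_neg at hlt
    have hev : ∀ᶠ b in nhds a, F b < u := (hFcont.continuousAt).eventually_lt continuousAt_const hlt
    have hev' : ∀ᶠ b in nhdsWithin a (Set.Ioi a), F b < u :=
      hev.filter_mono nhdsWithin_le_nhds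
    obtain ⟨b, hb, hbmem⟩ := (hev'.and eventually_mem_nhdsWithin).exists
    have : b ≤ a := le_csSup hSbdd hb.le
    exact absurd hbmem (by simpa using this)
  rw [hSeq, hμIic, hFa]

lemma map_z_eq (p : ℝ → ℝ) (hp_meas : Measurable p) (hp_nonneg : ∀ x, 0 ≤ p x)
    (hp_int : Integrable p) (hp_one : ∫ x, p x = 1)
    (z : ℝ → ℝ) (hz_meas : Measurable z)
    (hz : ∀ᵐ x ∂(volume : Measure ℝ), 0 < p x →
      stdNormalCDF (z x) = ∫ t in Set.Iic x, p t) :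
    Measure.map z (volume.withDensity (fun x => ENNReal.ofReal (p x))) =
      volume.withDensity (fun t => ENNReal.ofReal (stdNormalPDF t)) := by
  set μ := volume.withDensity (fun x => ENNReal.ofReal (p x)) with hμ
  have hprob : IsProbabilityMeasure μ := by
    constructor
    rw [hμ, withDensity_apply _ MeasurableSet.univ, Measure.restrict_univ,
      ← ofReal_integral_eq_lintegral_ofReal hp_int (ae_of_all _ hp_nonneg), hp_one,
      ENNReal.ofReal_one]
  have hprob2 : IsProbabilityMeasure (volume.withDensity
      (fun t => ENNReal.ofReal (stdNormalPDF t))) := by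
    constructor
    rw [withDensity_apply _ MeasurableSet.univ, Measure.restrict_univ,
      ← ofReal_integral_eq_lintegral_ofReal integrable_stdNormalPDF
        (ae_of_all _ fun t => (stdNormalPDF_pos t).le), integral_stdNormalPDF,
      ENNReal.ofReal_one]
  have hmap : IsProbabilityMeasure (Measure.map z μ) :=
    Measure.isProbabilityMeasure_map hz_meas.aemeasurable
  have hpos_ae : ∀ᵐ x ∂μ, 0 < p x := by
    rw [ae_iff, hμ]
    have hs : MeasurableSet {x | ¬ 0 < p x} := (measurableSet_lt measurable_const hp_meas).compl
    rw [withDensity_apply _ hs]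
    rw [setLIntegral_congr_fun_ae hs (ae_of_all _ fun x hx =>
      ENNReal.ofReal_eq_zero.2 (not_lt.1 hx))]
    simp
  have hz' : ∀ᵐ x ∂μ, 0 < p x → stdNormalCDF (z x) = ∫ t in Set.Iic x, p t :=
    (withDensity_absolutelyContinuous volume _).ae_le hz
  have haeeq : ∀ᵐ x ∂μ, stdNormalCDF (z x) = ∫ t in Set.Iic x, p t :=
    (hz'.and hpos_ae).mono fun x hx => hx.1 hx.2
  refine Measure.ext_of_Iic _ _ fun t => ?_
  rw [Measure.map_apply hz_meas measurableSet_Iic]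
  have hsetae : (z ⁻¹' Set.Iic t : Set ℝ) =ᵐ[μ]
      {x | (∫ s in Set.Iic x, p s) ≤ stdNormalCDF t} := by
    refine haeeq.mono fun x hx => ?_
    have h2 : (z x ≤ t) = ((∫ s in Set.Iic x, p s) ≤ stdNormalCDF t) := by
      rw [eq_iff_iff, ← hx, stdNormalCDF_strictMono.le_iff_le]
    exact h2
  rw [measure_congr hsetae,
    pit p hp_nonneg hp_int hp_one (stdNormalCDF_pos t) (stdNormalCDF_lt_one t),
    withDensity_apply _ measurableSet_Iic,
    ← ofReal_integral_eq_lintegral_ofReal integrable_stdNormalPDF.integrableOn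
      (ae_of_all _ fun s => (stdNormalPDF_pos s).le)]
  rfl

end Aux

/-- if `p` is a probability density with CDF `P` and `z` satisfies
`Φ(z(x)) = P(x)` for a.e. `x` with `p(x) > 0`, then the copula update
`x ↦ [1 − α + α·c(P(x), Φ(w); ρ)]·p(x)` (with the Gaussian copula density written as
`φ₂(z(x), w; ρ)/(φ(z(x))·φ(w))`) is nonnegative and integrates to one, i.e. it is
again a probability density. -/
theorem copula_update_is_density
    (p : ℝ → ℝ) (hp_meas : Measurable p) (hp_nonneg : ∀ x, 0 ≤ p x)
    (hp_int : Integrable p) (hp_one : ∫ x, p x = 1)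
    (z : ℝ → ℝ) (hz_meas : Measurable z)
    (hz : ∀ᵐ x ∂(volume : Measure ℝ), 0 < p x →
      stdNormalCDF (z x) = ∫ t in Set.Iic x, p t)
    (α ρ w : ℝ) (hα : α ∈ Set.Icc (0 : ℝ) 1) (hρ : ρ ∈ Set.Ioo (-1 : ℝ) 1) :
    (∀ x, 0 ≤ (1 - α + α * (biNormalPDF (z x) w ρ /
        (stdNormalPDF (z x) * stdNormalPDF w))) * p x) ∧
    ∫ x, (1 - α + α * (biNormalPDF (z x) w ρ /
        (stdNormalPDF (z x) * stdNormalPDF w))) * p x = 1 := by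
  obtain ⟨hα0, hα1⟩ := hα
  set G : ℝ → ℝ := fun t => biNormalPDF t w ρ / (stdNormalPDF t * stdNormalPDF w) with hG
  have hG_nonneg : ∀ t, 0 ≤ G t := fun t =>
    div_nonneg (biNormalPDF_nonneg t w ρ)
      (mul_nonneg (stdNormalPDF_pos t).le (stdNormalPDF_pos w).le)
  have hbm : Measurable fun t => biNormalPDF t w ρ := by
    have : (fun t => biNormalPDF t w ρ) = fun t => stdNormalPDF w *
        ProbabilityTheory.gaussianPDFReal (ρ * w) ⟨1 - ρ^2, by nlinarith [hρ.1, hρ.2]⟩ t := by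
      ext t; exact biNormalPDF_eq w ρ hρ t
    rw [this]
    exact (ProbabilityTheory.measurable_gaussianPDFReal _ _).const_mul _
  have hG_meas : Measurable G :=
    hbm.div (measurable_stdNormalPDF.mul measurable_const)
  constructor
  · intro x
    refine mul_nonneg ?_ (hp_nonneg x)
    have := hG_nonneg (z x)
    have h1 : 0 ≤ α * G (z x) := mul_nonneg hα0 this
    simp only [hG] at h1
    linarith
  -- the integral part
  set μ := volume.withDensity (fun x => ENNReal.ofReal (p x)) with hμ
  -- key lintegral computation
  have hbint : Integrable (fun t => biNormalPDF t w ρ * (stdNormalPDF w)⁻¹) := by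
    have : (fun t => biNormalPDF t w ρ * (stdNormalPDF w)⁻¹) = fun t =>
        stdNormalPDF w * ProbabilityTheory.gaussianPDFReal (ρ * w)
          ⟨1 - ρ^2, by nlinarith [hρ.1, hρ.2]⟩ t * (stdNormalPDF w)⁻¹ := by
      ext t; rw [biNormalPDF_eq w ρ hρ t]
    rw [this]
    exact ((ProbabilityTheory.integrable_gaussianPDFReal _ _).const_mul _).mul_const _
  have hbint_one : ∫ t, biNormalPDF t w ρ * (stdNormalPDF w)⁻¹ = 1 := by
    have hrw : (fun t => biNormalPDF t w ρ * (stdNormalPDF w)⁻¹) = fun t =>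
        ProbabilityTheory.gaussianPDFReal (ρ * w)
          ⟨1 - ρ^2, by nlinarith [hρ.1, hρ.2]⟩ t := by
      ext t
      rw [biNormalPDF_eq w ρ hρ t]
      field_simp [(stdNormalPDF_pos w).ne']
    rw [hrw]
    refine ProbabilityTheory.integral_gaussianPDFReal_eq_one _ ?_
    intro h
    have h2 := congrArg NNReal.toReal h
    simp only [NNReal.coe_mk, NNReal.coe_zero] at h2
    change 1 - ρ^2 = 0 at h2
    nlinarith [hρ.1, hρ.2]
  have hlint : ∫⁻ x, ENNReal.ofReal (G (z x) * p x) = 1 := by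
    have step1 : ∀ x, ENNReal.ofReal (G (z x) * p x) =
        ENNReal.ofReal (p x) * ENNReal.ofReal (G (z x)) := by
      intro x
      rw [ENNReal.ofReal_mul (hG_nonneg _), mul_comm]
    simp only [step1]
    have hwd := lintegral_withDensity_eq_lintegral_mul volume
      (hp_meas.ennreal_ofReal) (g := fun x => ENNReal.ofReal (G (z x)))
      ((hG_meas.comp hz_meas).ennreal_ofReal)
    simp only [Pi.mul_apply] at hwd
    rw [← hwd, ← hμ]
    have : ∫⁻ x, ENNReal.ofReal (G (z x)) ∂μ
        = ∫⁻ t, ENNReal.ofReal (G t) ∂(Measure.map z μ) :=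
      (lintegral_map hG_meas.ennreal_ofReal hz_meas).symm
    rw [this, hμ, map_z_eq p hp_meas hp_nonneg hp_int hp_one z hz_meas hz,
      lintegral_withDensity_eq_lintegral_mul volume
        measurable_stdNormalPDF.ennreal_ofReal hG_meas.ennreal_ofReal]
    have step2 : ∀ t, ENNReal.ofReal (stdNormalPDF t) * ENNReal.ofReal (G t)
        = ENNReal.ofReal (biNormalPDF t w ρ * (stdNormalPDF w)⁻¹) := by
      intro t
      rw [← ENNReal.ofReal_mul (stdNormalPDF_pos t).le]
      congr 1
      rw [hG]
      field_simp
      exact mul_div_mul_left _ _ (stdNormalPDF_pos t).ne'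
    simp only [Pi.mul_apply, step2]
    rw [← ofReal_integral_eq_lintegral_ofReal hbint
      (ae_of_all _ fun t => mul_nonneg (biNormalPDF_nonneg t w ρ)
        (inv_nonneg.2 (stdNormalPDF_pos w).le)), hbint_one, ENNReal.ofReal_one]
  have hGzp_int : Integrable (fun x => G (z x) * p x) := by
    refine ⟨((hG_meas.comp hz_meas).mul hp_meas).aestronglyMeasurable, ?_⟩
    rw [hasFiniteIntegral_iff_ofReal (ae_of_all _ fun x =>
      mul_nonneg (hG_nonneg _) (hp_nonneg x))]
    rw [hlint]
    exact ENNReal.one_lt_top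
  have hGzp_one : ∫ x, G (z x) * p x = 1 := by
    rw [integral_eq_lintegral_of_nonneg_ae (ae_of_all _ fun x =>
        mul_nonneg (hG_nonneg _) (hp_nonneg x))
      ((hG_meas.comp hz_meas).mul hp_meas).aestronglyMeasurable, hlint]
    simp
  have hre : ∀ x, (1 - α + α * (biNormalPDF (z x) w ρ /
      (stdNormalPDF (z x) * stdNormalPDF w))) * p x
      = (1 - α) * p x + α * (G (z x) * p x) := by
    intro x
    simp only [hG]
    ring
  rw [funext hre, integral_add (hp_int.const_mul _) (hGzp_int.const_mul _),
    integral_const_mul, integral_const_mul, hp_one, hGzp_one]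
  ring
end

section
/- Let p be a joint probability density on ℝ² with marginal p_X(x) = ∫_ℝ p(x,y) dy, and for x with p_X(x) > 0 let P(y | x) denote the conditional CDF of y given x. Suppose z : ℝ² → ℝ is measurable with Φ(z(x,y)) = P(y | x) for almost every (x,y) with p_X(x) > 0. Then for every α ∈ [0,1], ρ ∈ (−1,1), w ∈ ℝ, and every measurable a : ℝ → [0,∞), for almost every x with p_X(x) > 0: ∫_ℝ [1 − α + α·a(x)·φ₂(z(x,y), w; ρ)/(φ(z(x,y))·φ(w))]·p(x,y) dy = [1 − α + α·a(x)]·p_X(x). That is, integrating out the last coordinate of the multivariate copula update yields the copula update of the marginal, so the recursive predictive updates are marginally coherent. -/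
open MeasureTheory

open Set Filter Topology NNReal ENNReal

namespace CopulaAux

lemma pdf_eq (t : ℝ) : stdNormalPDF t = (Real.sqrt (2 * Real.pi))⁻¹ * Real.exp (-(1/2 : ℝ) * t ^ 2) := by
  unfold stdNormalPDF; ring_nf

lemma pdf_pos (t : ℝ) : 0 < stdNormalPDF t := by
  unfold stdNormalPDF
  have : (0:ℝ) < Real.sqrt (2 * Real.pi) := Real.sqrt_pos.2 (by positivity)
  positivity

lemma pdf_cont : Continuous stdNormalPDF := by
  unfold stdNormalPDF; continuity

lemma pdf_meas : Measurable stdNormalPDF := pdf_cont.measurable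

lemma pdf_integrable : Integrable stdNormalPDF := by
  have h : stdNormalPDF = fun t => (Real.sqrt (2 * Real.pi))⁻¹ * Real.exp (-(1/2 : ℝ) * t ^ 2) :=
    funext pdf_eq
  rw [h]
  exact (integrable_exp_neg_mul_sq (by norm_num)).const_mul _

lemma pdf_integral : ∫ t, stdNormalPDF t = 1 := by
  have h : stdNormalPDF = fun t => (Real.sqrt (2 * Real.pi))⁻¹ * Real.exp (-(1/2 : ℝ) * t ^ 2) :=
    funext pdf_eq
  rw [h, integral_const_mul, integral_gaussian]
  have h2 : (Real.pi / (1/2 : ℝ)) = 2 * Real.pi := by ring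
  rw [h2]
  exact inv_mul_cancel₀ (ne_of_gt (Real.sqrt_pos.2 (by positivity)))

lemma cdf_strictMono : StrictMono stdNormalCDF := by
  intro a b hab
  have h := intervalIntegral.integral_Iic_sub_Iic (μ := volume) (f := stdNormalPDF) (a := a) (b := b)
    pdf_integrable.integrableOn pdf_integrable.integrableOn
  have hpos : 0 < ∫ x in a..b, stdNormalPDF x :=
    intervalIntegral.intervalIntegral_pos_of_pos pdf_integrable.intervalIntegrable pdf_pos hab
  unfold stdNormalCDF
  linarith [h]

lemma cdf_nonneg (s : ℝ) : 0 ≤ stdNormalCDF s :=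
  setIntegral_nonneg measurableSet_Iic fun t _ => (pdf_pos t).le

lemma cdf_le_one (s : ℝ) : stdNormalCDF s ≤ 1 := by
  rw [← pdf_integral]
  exact setIntegral_le_integral pdf_integrable (ae_of_all _ fun t => (pdf_pos t).le)

lemma cdf_mem_Ioo (s : ℝ) : stdNormalCDF s ∈ Set.Ioo (0:ℝ) 1 := by
  constructor
  · exact lt_of_le_of_lt (cdf_nonneg (s - 1)) (cdf_strictMono (by linarith))
  · exact lt_of_lt_of_le (cdf_strictMono (show s < s + 1 by linarith)) (cdf_le_one (s + 1))

end CopulaAux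

namespace CopulaAux

lemma map_cdf {f : ℝ → ℝ} (hm : Measurable f) (h0 : ∀ y, 0 ≤ f y) (hi : Integrable f)
    (h1 : ∫ y, f y = 1) :
    Measure.map (fun y => ∫ t in Set.Iic y, f t)
      (volume.withDensity fun y => ENNReal.ofReal (f y)) = volume.restrict (Set.Ioc (0:ℝ) 1) := by
  set F : ℝ → ℝ := fun y => ∫ t in Set.Iic y, f t with hFdef
  have hF0 : ∀ y, 0 ≤ F y := fun y => setIntegral_nonneg measurableSet_Iic fun t _ => h0 t
  have hF1 : ∀ y, F y ≤ 1 := fun y => by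
    rw [← h1]; exact setIntegral_le_integral hi (ae_of_all _ h0)
  have hFmono : Monotone F := fun a b hab =>
    setIntegral_mono_set hi.integrableOn (ae_of_all _ h0)
      (HasSubset.Subset.eventuallyLE (Iic_subset_Iic.2 hab))
  have hFcont : Continuous F := by
    have hEq : F = fun b => F 0 + ∫ x in (0:ℝ)..b, f x := funext fun b => by
      rw [← intervalIntegral.integral_Iic_sub_Iic hi.integrableOn hi.integrableOn]; ring
    rw [hEq]
    exact continuous_const.add (hi.continuous_primitive 0)
  have hFmeas : Measurable F := hFcont.measurable
  have htop : Tendsto F atTop (𝓝 1) := by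
    have h := (aecover_Iic (μ := (volume : Measure ℝ)) (l := atTop)
      (b := id) tendsto_id).integral_tendsto_of_countably_generated hi
    rwa [h1] at h
  have hbot : Tendsto F atBot (𝓝 0) := by
    have h := (aecover_Ioi (μ := (volume : Measure ℝ)) (l := atBot)
      (a := id) tendsto_id).integral_tendsto_of_countably_generated hi
    rw [h1] at h
    have heq : F = fun y => 1 - ∫ t in Set.Ioi y, f t := funext fun y => by
      have h2 := intervalIntegral.integral_Iic_add_Ioi (μ := volume) (b := y)
        hi.integrableOn hi.integrableOn
      rw [h1] at h2; simp only [hFdef]; linarith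
    rw [heq]
    have := (tendsto_const_nhds (x := (1:ℝ)) (f := atBot)).sub h
    simpa using this
  set μ := volume.withDensity fun y => ENNReal.ofReal (f y) with hμdef
  have hμs : ∀ s : Set ℝ, MeasurableSet s → μ s = ENNReal.ofReal (∫ y in s, f y) := by
    intro s hs
    rw [hμdef, withDensity_apply _ hs,
      ← ofReal_integral_eq_lintegral_ofReal hi.integrableOn (ae_of_all _ h0)]
  have hμuniv : μ Set.univ = 1 := by
    rw [hμs _ MeasurableSet.univ, setIntegral_univ, h1, ENNReal.ofReal_one]
  haveI : IsFiniteMeasure μ := ⟨by rw [hμuniv]; exact ENNReal.one_lt_top⟩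
  haveI : IsFiniteMeasure (Measure.map F μ) := Measure.isFiniteMeasure_map μ F
  refine Measure.ext_of_Iic _ _ fun c => ?_
  rw [Measure.map_apply hFmeas measurableSet_Iic, Measure.restrict_apply measurableSet_Iic]
  rcases lt_or_ge c 0 with hc | hc
  · have h1' : F ⁻¹' Set.Iic c = ∅ :=
      Set.eq_empty_iff_forall_notMem.2 fun y hy => absurd ((hF0 y).trans hy) (not_le.2 hc)
    have h2' : Set.Iic c ∩ Set.Ioc (0:ℝ) 1 = ∅ := by
      apply Set.eq_empty_iff_forall_notMem.2
      rintro y ⟨hy1, hy2, -⟩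
      exact absurd (lt_of_lt_of_le hy2 hy1) (not_lt.2 hc.le)
    rw [h1', h2']; simp
  · rcases le_or_gt 1 c with hc1 | hc1
    · have h1' : F ⁻¹' Set.Iic c = Set.univ :=
        Set.eq_univ_iff_forall.2 fun y => (hF1 y).trans hc1
      have h2' : Set.Iic c ∩ Set.Ioc (0:ℝ) 1 = Set.Ioc 0 1 :=
        Set.inter_eq_self_of_subset_right fun y hy => hy.2.trans hc1
      rw [h1', h2', hμuniv, Real.volume_Ioc]
      norm_num
    · have h2' : Set.Iic c ∩ Set.Ioc (0:ℝ) 1 = Set.Ioc 0 c := by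
        ext y
        simp only [Set.mem_inter_iff, Set.mem_Iic, Set.mem_Ioc]
        constructor
        · rintro ⟨ha, hb, -⟩; exact ⟨hb, ha⟩
        · rintro ⟨ha, hb⟩; exact ⟨hb, ha, hb.trans hc1.le⟩
      rw [h2', Real.volume_Ioc, sub_zero]
      rcases (F ⁻¹' Set.Iic c).eq_empty_or_nonempty with hS | hS
      · have hc0 : c = 0 := by
          by_contra h
          have hcpos : 0 < c := lt_of_le_of_ne hc (Ne.symm h)
          obtain ⟨y, hy⟩ := (hbot.eventually_lt_const hcpos).exists
          have : y ∈ F ⁻¹' Set.Iic c := Set.mem_preimage.2 hy.le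
          rw [hS] at this
          exact this
        rw [hS, hc0]; simp
      · have hclosed : IsClosed (F ⁻¹' Set.Iic c) := isClosed_Iic.preimage hFcont
        have hbdd : BddAbove (F ⁻¹' Set.Iic c) := by
          obtain ⟨b, hb⟩ := Filter.eventually_atTop.1 (htop.eventually_const_lt hc1)
          exact ⟨b, fun y hy => le_of_not_gt fun hby => (hb y hby.le).not_ge hy⟩
        set y₀ := sSup (F ⁻¹' Set.Iic c) with hy₀def
        have hy₀mem : y₀ ∈ F ⁻¹' Set.Iic c := hclosed.csSup_mem hS hbdd
        have hSeq : F ⁻¹' Set.Iic c = Set.Iic y₀ := by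
          ext y
          constructor
          · exact fun hy => le_csSup hbdd hy
          · exact fun hy => Set.mem_preimage.2 (le_trans (hFmono hy) hy₀mem)
        have hFy₀ : F y₀ = c := by
          refine le_antisymm hy₀mem ?_
          by_contra h
          push_neg at h
          have hev : ∀ᶠ y in nhdsWithin y₀ (Set.Ioi y₀), F y < c :=
            ((hFcont.continuousAt).eventually_lt_const h).filter_mono nhdsWithin_le_nhds
          obtain ⟨y, hy1, hy2⟩ := (eventually_mem_nhdsWithin.and hev).exists
          exact absurd (le_csSup hbdd (Set.mem_preimage.2 hy2.le)) (not_le.2 hy1)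
        rw [hSeq, hμs _ measurableSet_Iic]
        exact congrArg ENNReal.ofReal hFy₀

end CopulaAux

namespace CopulaAux

lemma withDensity_Iic {f : ℝ → ℝ} (h0 : ∀ y, 0 ≤ f y) (hi : Integrable f) (s : ℝ) :
    (volume.withDensity fun y => ENNReal.ofReal (f y)) (Set.Iic s)
      = ENNReal.ofReal (∫ y in Set.Iic s, f y) := by
  rw [withDensity_apply _ measurableSet_Iic,
    ← ofReal_integral_eq_lintegral_ofReal hi.integrableOn (ae_of_all _ h0)]

lemma map_z {f ζ : ℝ → ℝ} (hm : Measurable f) (h0 : ∀ y, 0 ≤ f y) (hi : Integrable f)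
    (h1 : ∫ y, f y = 1) (hζm : Measurable ζ)
    (hζ : ∀ᵐ y : ℝ ∂volume, stdNormalCDF (ζ y) = ∫ t in Set.Iic y, f t) :
    Measure.map ζ (volume.withDensity fun y => ENNReal.ofReal (f y)) =
      volume.withDensity fun t => ENNReal.ofReal (stdNormalPDF t) := by
  set F : ℝ → ℝ := fun y => ∫ t in Set.Iic y, f t with hFdef
  have hFcont : Continuous F := by
    have hEq : F = fun b => F 0 + ∫ x in (0:ℝ)..b, f x := funext fun b => by
      rw [← intervalIntegral.integral_Iic_sub_Iic hi.integrableOn hi.integrableOn]; ring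
    rw [hEq]
    exact continuous_const.add (hi.continuous_primitive 0)
  set μ := volume.withDensity fun y => ENNReal.ofReal (f y) with hμdef
  have hμuniv : μ Set.univ = 1 := by
    rw [hμdef, withDensity_apply _ MeasurableSet.univ,
      ← ofReal_integral_eq_lintegral_ofReal hi.integrableOn (ae_of_all _ h0),
      setIntegral_univ, h1, ENNReal.ofReal_one]
  haveI : IsFiniteMeasure μ := ⟨by rw [hμuniv]; exact ENNReal.one_lt_top⟩
  haveI : IsFiniteMeasure (Measure.map ζ μ) := Measure.isFiniteMeasure_map μ ζ
  have hac : μ ≪ volume := withDensity_absolutelyContinuous _ _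
  refine Measure.ext_of_Iic _ _ fun s => ?_
  rw [Measure.map_apply hζm measurableSet_Iic]
  have hζμ : ∀ᵐ y ∂μ, stdNormalCDF (ζ y) = F y := hζ.filter_mono hac.ae_le
  have hae : (ζ ⁻¹' Set.Iic s : Set ℝ) =ᵐ[μ] (F ⁻¹' Set.Iic (stdNormalCDF s)) := by
    rw [Filter.eventuallyEq_set]
    filter_upwards [hζμ] with y hy
    simp only [Set.mem_preimage, Set.mem_Iic]
    rw [← hy]
    exact cdf_strictMono.le_iff_le.symm
  calc μ (ζ ⁻¹' Set.Iic s) = μ (F ⁻¹' Set.Iic (stdNormalCDF s)) := measure_congr hae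
    _ = Measure.map F μ (Set.Iic (stdNormalCDF s)) :=
        (Measure.map_apply hFcont.measurable measurableSet_Iic).symm
    _ = volume.restrict (Set.Ioc (0:ℝ) 1) (Set.Iic (stdNormalCDF s)) := by
        rw [hμdef, map_cdf hm h0 hi h1]
    _ = ENNReal.ofReal (stdNormalCDF s) := by
        rw [Measure.restrict_apply measurableSet_Iic]
        have h2' : Set.Iic (stdNormalCDF s) ∩ Set.Ioc (0:ℝ) 1 = Set.Ioc 0 (stdNormalCDF s) := by
          obtain ⟨hsp, hs1⟩ := cdf_mem_Ioo s
          ext u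
          simp only [Set.mem_inter_iff, Set.mem_Iic, Set.mem_Ioc]
          constructor
          · rintro ⟨ha, hb, -⟩; exact ⟨hb, ha⟩
          · rintro ⟨ha, hb⟩; exact ⟨hb, ha, hb.trans hs1.le⟩
        rw [h2', Real.volume_Ioc, sub_zero]
    _ = (volume.withDensity fun t => ENNReal.ofReal (stdNormalPDF t)) (Set.Iic s) := by
        rw [withDensity_Iic (fun t => (pdf_pos t).le) pdf_integrable]
        rfl

lemma integral_withDensity_ofReal {f : ℝ → ℝ} (hm : Measurable f) (h0 : ∀ y, 0 ≤ f y)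
    (g : ℝ → ℝ) :
    ∫ y, g y ∂(volume.withDensity fun y => ENNReal.ofReal (f y)) = ∫ y, g y * f y := by
  have hEq : (fun y => ENNReal.ofReal (f y))
      = fun y => ((Real.toNNReal (f y) : ℝ≥0) : ℝ≥0∞) := rfl
  have hm' : Measurable fun y => (f y).toNNReal := measurable_real_toNNReal.comp hm
  rw [hEq, integral_withDensity_eq_integral_smul hm' g]
  congr 1
  funext y
  rw [NNReal.smul_def, Real.coe_toNNReal _ (h0 y), smul_eq_mul]
  ring

lemma integral_comp {f ζ : ℝ → ℝ} (hm : Measurable f) (h0 : ∀ y, 0 ≤ f y)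
    (hi : Integrable f) (h1 : ∫ y, f y = 1) (hζm : Measurable ζ)
    (hζ : ∀ᵐ y : ℝ ∂volume, stdNormalCDF (ζ y) = ∫ t in Set.Iic y, f t)
    (g : ℝ → ℝ) (hg : Measurable g) :
    ∫ y, g (ζ y) * f y = ∫ t, g t * stdNormalPDF t := by
  calc ∫ y, g (ζ y) * f y
      = ∫ y, g (ζ y) ∂(volume.withDensity fun y => ENNReal.ofReal (f y)) :=
        (integral_withDensity_ofReal hm h0 _).symm
    _ = ∫ t, g t ∂(Measure.map ζ (volume.withDensity fun y => ENNReal.ofReal (f y))) :=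
        (integral_map hζm.aemeasurable hg.aestronglyMeasurable).symm
    _ = ∫ t, g t ∂(volume.withDensity fun t => ENNReal.ofReal (stdNormalPDF t)) := by
        rw [map_z hm h0 hi h1 hζm hζ]
    _ = ∫ t, g t * stdNormalPDF t :=
        integral_withDensity_ofReal pdf_meas (fun t => (pdf_pos t).le) _

end CopulaAux

namespace CopulaAux

lemma biNormal_factor {ρ w : ℝ} (hs : 0 < 1 - ρ ^ 2) (t : ℝ) :
    biNormalPDF t w ρ =
      ((Real.sqrt (1 - ρ ^ 2))⁻¹ * Real.exp (w ^ 2 / 2 - (ρ * t - w) ^ 2 / (2 * (1 - ρ ^ 2)))) *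
        (stdNormalPDF t * stdNormalPDF w) := by
  unfold biNormalPDF stdNormalPDF
  have hπ : (0:ℝ) < 2 * Real.pi := by positivity
  have hsq : Real.sqrt (2 * Real.pi) * Real.sqrt (2 * Real.pi) = 2 * Real.pi :=
    Real.mul_self_sqrt hπ.le
  have hexp : Real.exp (w ^ 2 / 2 - (ρ * t - w) ^ 2 / (2 * (1 - ρ ^ 2))) *
      (Real.exp (-t ^ 2 / 2) * Real.exp (-w ^ 2 / 2)) =
      Real.exp (-(t ^ 2 - 2 * ρ * t * w + w ^ 2) / (2 * (1 - ρ ^ 2))) := by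
    rw [← Real.exp_add, ← Real.exp_add]
    congr 1
    field_simp
    ring
  rw [← hexp]
  conv_lhs => rw [← hsq]
  ring

lemma ratio_eq {ρ w : ℝ} (hs : 0 < 1 - ρ ^ 2) (t : ℝ) :
    biNormalPDF t w ρ / (stdNormalPDF t * stdNormalPDF w) =
      (Real.sqrt (1 - ρ ^ 2))⁻¹ * Real.exp (w ^ 2 / 2 - (ρ * t - w) ^ 2 / (2 * (1 - ρ ^ 2))) := by
  rw [biNormal_factor hs t, mul_div_assoc,
    div_self (ne_of_gt (mul_pos (pdf_pos t) (pdf_pos w))), mul_one]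

lemma integral_g {ρ w : ℝ} (hs : 0 < 1 - ρ ^ 2) :
    ∫ t, ((Real.sqrt (1 - ρ ^ 2))⁻¹ *
        Real.exp (w ^ 2 / 2 - (ρ * t - w) ^ 2 / (2 * (1 - ρ ^ 2)))) * stdNormalPDF t = 1 := by
  have hsq : (0:ℝ) < Real.sqrt (1 - ρ ^ 2) := Real.sqrt_pos.2 hs
  have h2π : (0:ℝ) < Real.sqrt (2 * Real.pi) := Real.sqrt_pos.2 (by positivity)
  have key : ∀ t : ℝ, ((Real.sqrt (1 - ρ ^ 2))⁻¹ *
      Real.exp (w ^ 2 / 2 - (ρ * t - w) ^ 2 / (2 * (1 - ρ ^ 2)))) * stdNormalPDF t =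
      ((Real.sqrt (1 - ρ ^ 2))⁻¹ * (Real.sqrt (2 * Real.pi))⁻¹) *
        Real.exp (-(1 / (2 * (1 - ρ ^ 2))) * (t - ρ * w) ^ 2) := by
    intro t
    unfold stdNormalPDF
    rw [show ((Real.sqrt (1 - ρ ^ 2))⁻¹ *
        Real.exp (w ^ 2 / 2 - (ρ * t - w) ^ 2 / (2 * (1 - ρ ^ 2)))) *
        ((Real.sqrt (2 * Real.pi))⁻¹ * Real.exp (-t ^ 2 / 2)) =
        ((Real.sqrt (1 - ρ ^ 2))⁻¹ * (Real.sqrt (2 * Real.pi))⁻¹) *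
        (Real.exp (w ^ 2 / 2 - (ρ * t - w) ^ 2 / (2 * (1 - ρ ^ 2))) * Real.exp (-t ^ 2 / 2))
      from by ring]
    congr 1
    rw [← Real.exp_add]
    congr 1
    field_simp
    ring
  simp_rw [key]
  rw [integral_const_mul]
  have hshift : ∫ t : ℝ, Real.exp (-(1 / (2 * (1 - ρ ^ 2))) * (t - ρ * w) ^ 2) =
      ∫ t : ℝ, Real.exp (-(1 / (2 * (1 - ρ ^ 2))) * t ^ 2) := by
    exact integral_sub_right_eq_self (μ := (volume : Measure ℝ))
      (fun t : ℝ => Real.exp (-(1 / (2 * (1 - ρ ^ 2))) * t ^ 2)) (ρ * w)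
  rw [hshift, integral_gaussian]
  rw [show Real.pi / (1 / (2 * (1 - ρ ^ 2))) = (2 * Real.pi) * (1 - ρ ^ 2) by field_simp]
  rw [Real.sqrt_mul (by positivity) (1 - ρ ^ 2)]
  field_simp

end CopulaAux

/-- marginal coherence of the multivariate copula update: integrating
out the last coordinate of the multivariate copula update
`[1 − α + α·a(x)·c(P(y|x), Φ(w); ρ)]·p(x,y)` (with the Gaussian copula density written
via `z` with `Φ(z(x,y)) = P(y|x)` a.e.) yields the copula update
`[1 − α + α·a(x)]·p_X(x)` of the marginal, for a.e. `x` with `p_X(x) > 0`. -/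
theorem copula_update_marginal_coherence
    (p : ℝ → ℝ → ℝ) (hp_meas : Measurable (Function.uncurry p))
    (hp_nonneg : ∀ x y, 0 ≤ p x y)
    (hp_int : Integrable (Function.uncurry p) (volume : Measure (ℝ × ℝ)))
    (pX : ℝ → ℝ) (hpX : pX = fun x => ∫ y, p x y)
    (z : ℝ → ℝ → ℝ) (hz_meas : Measurable (Function.uncurry z))
    (hz : ∀ᵐ xy : ℝ × ℝ ∂(volume : Measure (ℝ × ℝ)), 0 < pX xy.1 →
      stdNormalCDF (z xy.1 xy.2) = (∫ t in Set.Iic xy.2, p xy.1 t) / pX xy.1)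
    (α ρ w : ℝ) (hα : α ∈ Set.Icc (0 : ℝ) 1) (hρ : ρ ∈ Set.Ioo (-1 : ℝ) 1)
    (a : ℝ → ℝ) (ha_meas : Measurable a) (ha_nonneg : ∀ x, 0 ≤ a x) :
    ∀ᵐ x ∂(volume : Measure ℝ), 0 < pX x →
      (∫ y, (1 - α + α * a x * (biNormalPDF (z x y) w ρ /
          (stdNormalPDF (z x y) * stdNormalPDF w))) * p x y) =
        (1 - α + α * a x) * pX x := by
  obtain ⟨hρ1, hρ2⟩ := hρ
  have hs : 0 < 1 - ρ ^ 2 := by nlinarith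
  set g : ℝ → ℝ := fun t =>
    (Real.sqrt (1 - ρ ^ 2))⁻¹ * Real.exp (w ^ 2 / 2 - (ρ * t - w) ^ 2 / (2 * (1 - ρ ^ 2)))
    with hgdef
  have hg_cont : Continuous g := by
    rw [hgdef]; continuity
  have hg_meas : Measurable g := hg_cont.measurable
  have hg_nonneg : ∀ t, 0 ≤ g t := fun t => by
    have := Real.sqrt_nonneg (1 - ρ ^ 2)
    positivity
  have hg_bound : ∀ t, g t ≤ (Real.sqrt (1 - ρ ^ 2))⁻¹ * Real.exp (w ^ 2 / 2) := fun t => by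
    have h1 : Real.exp (w ^ 2 / 2 - (ρ * t - w) ^ 2 / (2 * (1 - ρ ^ 2))) ≤
        Real.exp (w ^ 2 / 2) := by
      apply Real.exp_le_exp.2
      have : 0 ≤ (ρ * t - w) ^ 2 / (2 * (1 - ρ ^ 2)) := by positivity
      linarith
    exact mul_le_mul_of_nonneg_left h1 (inv_nonneg.2 (Real.sqrt_nonneg _))
  have hgint : ∫ t, g t * stdNormalPDF t = 1 := CopulaAux.integral_g hs
  rw [Measure.volume_eq_prod] at hz
  have hz' := Measure.ae_ae_of_ae_prod hz
  have hint' : ∀ᵐ x : ℝ ∂volume, Integrable (fun y => p x y) volume := by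
    have h := hp_int
    rw [Measure.volume_eq_prod] at h
    exact h.prod_right_ae
  filter_upwards [hz', hint'] with x hzx hintx hpos
  have hfx_meas : Measurable (fun y => p x y) := hp_meas.comp measurable_prodMk_left
  have hzx_meas : Measurable (fun y => z x y) := hz_meas.comp measurable_prodMk_left
  have hM : (0:ℝ) < pX x := hpos
  have hMint : ∫ y, p x y = pX x := by rw [hpX]
  set f' : ℝ → ℝ := fun y => p x y / pX x with hf'def
  have hf'_meas : Measurable f' := hfx_meas.div_const _
  have hf'_nonneg : ∀ y, 0 ≤ f' y := fun y => div_nonneg (hp_nonneg x y) hM.le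
  have hf'_int : Integrable f' volume := hintx.div_const _
  have hf'_one : ∫ y, f' y = 1 := by
    rw [hf'def]
    rw [integral_div, hMint, div_self (ne_of_gt hM)]
  have hcdf' : ∀ᵐ y : ℝ ∂volume, stdNormalCDF (z x y) = ∫ t in Set.Iic y, f' t := by
    filter_upwards [hzx] with y hy
    rw [hf'def, integral_div]
    exact hy hpos
  have key : ∫ y, g (z x y) * f' y = 1 := by
    rw [CopulaAux.integral_comp hf'_meas hf'_nonneg hf'_int hf'_one hzx_meas hcdf' g hg_meas]
    exact hgint
  have key2 : ∫ y, g (z x y) * p x y = pX x := by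
    have hsplit : ∫ y, g (z x y) * f' y = (∫ y, g (z x y) * p x y) / pX x := by
      rw [← integral_div]
      exact integral_congr_ae (ae_of_all _ fun y => (mul_div_assoc _ _ _).symm)
    rw [hsplit] at key
    field_simp at key
    linarith
  have hgi : Integrable (fun y => g (z x y) * p x y) volume := by
    refine Integrable.mono
      (hintx.const_mul ((Real.sqrt (1 - ρ ^ 2))⁻¹ * Real.exp (w ^ 2 / 2))) ?_ ?_
    · exact ((hg_meas.comp hzx_meas).mul hfx_meas).aestronglyMeasurable
    · refine ae_of_all _ fun y => ?_
      have h1 : 0 ≤ g (z x y) * p x y := mul_nonneg (hg_nonneg _) (hp_nonneg x y)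
      have h2 : 0 ≤ ((Real.sqrt (1 - ρ ^ 2))⁻¹ * Real.exp (w ^ 2 / 2)) * p x y :=
        mul_nonneg (mul_nonneg (inv_nonneg.2 (Real.sqrt_nonneg _)) (Real.exp_nonneg _))
          (hp_nonneg x y)
      rw [Real.norm_eq_abs, Real.norm_eq_abs, abs_of_nonneg h1, abs_of_nonneg h2]
      exact mul_le_mul_of_nonneg_right (hg_bound _) (hp_nonneg x y)
  have hfun : (fun y => (1 - α + α * a x * (biNormalPDF (z x y) w ρ /
      (stdNormalPDF (z x y) * stdNormalPDF w))) * p x y)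
      = fun y => (1 - α) * p x y + (α * a x) * (g (z x y) * p x y) := by
    funext y
    rw [CopulaAux.ratio_eq hs (z x y)]
    ring
  rw [hfun, integral_add (hintx.const_mul _) (hgi.const_mul _),
    integral_const_mul, integral_const_mul, hMint, key2]
  ring
end

section
/- For all μ, μᵢ, yᵢ ∈ ℝ, every β ∈ [0,1], and every ρ ∈ (−1,1), ∫_ℝ y · [ (1 − β)·φ(y − μ) + β·φ₂(y − μ, yᵢ − μᵢ; ρ)/φ(yᵢ − μᵢ) ] dy = μ + β·ρ·(yᵢ − μᵢ). That is, if the predictive conditional density is N(μ, 1) and is updated by the Gaussian copula update p_i(y|x) = [1 − β + β·c(Φ(y − μ), Φ(yᵢ − μᵢ); ρ)]·φ(y − μ), the updated conditional mean equals the previous conditional mean plus β·ρ times the residual yᵢ − μᵢ at the new observation. -/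
open MeasureTheory

open Real ProbabilityTheory Filter
open scoped NNReal

lemma integrable_id_mul_gaussian (m : ℝ) (v : ℝ≥0) :
    Integrable (fun y : ℝ => y * gaussianPDFReal m v y) := by
  rcases eq_or_ne v 0 with hv | hv
  · simp [hv]
  have hv0 : (0:ℝ) < v := lt_of_le_of_ne v.2 (by exact_mod_cast (Ne.symm hv))
  have hb : (0:ℝ) < (2 * (v:ℝ))⁻¹ := by positivity
  have h0 : Integrable (fun y : ℝ => y * gaussianPDFReal 0 v y) := by
    have := (integrable_mul_exp_neg_mul_sq hb).const_mul (√(2 * π * v))⁻¹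
    refine this.congr (Eventually.of_forall fun y => ?_)
    simp only [gaussianPDFReal, sub_zero]
    rw [show -(2 * (v:ℝ))⁻¹ * y ^ 2 = -y ^ 2 / (2 * (v:ℝ)) by ring]
    ring
  have h1 := h0.comp_sub_right m
  refine (h1.add ((integrable_gaussianPDFReal 0 v).comp_sub_right m |>.const_mul m)).congr
    (Eventually.of_forall fun y => ?_)
  simp only [Pi.add_apply, gaussianPDFReal, sub_zero, sub_sub_cancel]
  ring

lemma integral_id_mul_gaussian (m : ℝ) {v : ℝ≥0} (hv : v ≠ 0) :
    ∫ y : ℝ, y * gaussianPDFReal m v y = m := by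
  have hshift : ∫ y : ℝ, y * gaussianPDFReal m v y
      = ∫ y : ℝ, (y + m) * gaussianPDFReal m v (y + m) := by
    rw [integral_add_right_eq_self (fun y : ℝ => y * gaussianPDFReal m v y) m]
  rw [hshift]
  have hg : ∀ y : ℝ, gaussianPDFReal m v (y + m) = gaussianPDFReal 0 v y := by
    intro y; simp [gaussianPDFReal]
  simp_rw [hg, add_mul]
  have hodd : ∫ y : ℝ, y * gaussianPDFReal 0 v y = 0 := by
    have h1 := integral_neg_eq_self (fun y : ℝ => y * gaussianPDFReal 0 v y) volume
    have h2 : ∀ y : ℝ, (-y) * gaussianPDFReal 0 v (-y) = -(y * gaussianPDFReal 0 v y) := by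
      intro y; simp [gaussianPDFReal]
    simp_rw [h2, integral_neg] at h1
    linarith
  rw [integral_add (by simpa using integrable_id_mul_gaussian 0 v)
      ((integrable_gaussianPDFReal 0 v).const_mul m), hodd, zero_add,
    integral_const_mul, integral_gaussianPDFReal_eq_one 0 hv, mul_one]

lemma stdNormal_eq_gaussian (μ y : ℝ) : stdNormalPDF (y - μ) = gaussianPDFReal μ 1 y := by
  simp [stdNormalPDF, gaussianPDFReal]

lemma biNormal_div_eq_gaussian (μ w ρ y : ℝ) (hρ : ρ ∈ Set.Ioo (-1 : ℝ) 1) :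
    biNormalPDF (y - μ) w ρ / stdNormalPDF w
      = gaussianPDFReal (μ + ρ * w) ⟨1 - ρ ^ 2, by nlinarith [hρ.1, hρ.2]⟩ y := by
  have hs : (0:ℝ) < 1 - ρ ^ 2 := by nlinarith [hρ.1, hρ.2]
  have hπ : (0:ℝ) < 2 * π := by positivity
  have hstd : stdNormalPDF w ≠ 0 := by
    unfold stdNormalPDF; positivity
  rw [div_eq_iff hstd]
  unfold biNormalPDF gaussianPDFReal stdNormalPDF
  show _ = (√(2 * π * (1 - ρ ^ 2)))⁻¹ * rexp (-(y - (μ + ρ * w)) ^ 2 / (2 * (1 - ρ ^ 2))) *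
      ((√(2 * π))⁻¹ * rexp (-w ^ 2 / 2))
  rw [mul_mul_mul_comm, ← Real.exp_add]
  congr 1
  · have h2π : √(2 * π) * √(2 * π) = 2 * π := Real.mul_self_sqrt hπ.le
    rw [Real.sqrt_mul hπ.le, ← mul_inv]
    congr 1
    linear_combination (-√(1 - ρ ^ 2)) * h2π
  · field_simp
    ring

/-- if the predictive conditional density `N(μ, 1)` is updated by the
Gaussian copula update `p_i(y|x) = [1 − β + β·c(Φ(y−μ), Φ(yᵢ−μᵢ); ρ)]·φ(y−μ)`, the
updated conditional mean equals `μ + β·ρ·(yᵢ − μᵢ)`. -/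
theorem copula_update_conditional_mean (μ μᵢ yᵢ β ρ : ℝ)
    (hβ : β ∈ Set.Icc (0 : ℝ) 1) (hρ : ρ ∈ Set.Ioo (-1 : ℝ) 1) :
    ∫ y : ℝ, y * ((1 - β) * stdNormalPDF (y - μ) +
        β * (biNormalPDF (y - μ) (yᵢ - μᵢ) ρ / stdNormalPDF (yᵢ - μᵢ))) =
      μ + β * ρ * (yᵢ - μᵢ) := by
  obtain ⟨hρ1, hρ2⟩ := hρ
  have hs : (0:ℝ) < 1 - ρ ^ 2 := by nlinarith
  set s : ℝ≥0 := ⟨1 - ρ ^ 2, hs.le⟩ with hsdef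
  have hsne : s ≠ 0 := by
    rw [← NNReal.coe_ne_zero]
    exact ne_of_gt hs
  have hpt : ∀ y : ℝ, y * ((1 - β) * stdNormalPDF (y - μ) +
      β * (biNormalPDF (y - μ) (yᵢ - μᵢ) ρ / stdNormalPDF (yᵢ - μᵢ)))
      = (1 - β) * (y * gaussianPDFReal μ 1 y)
        + β * (y * gaussianPDFReal (μ + ρ * (yᵢ - μᵢ)) s y) := by
    intro y
    rw [stdNormal_eq_gaussian, biNormal_div_eq_gaussian μ (yᵢ - μᵢ) ρ y ⟨hρ1, hρ2⟩]
    ring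
  simp_rw [hpt]
  rw [integral_add ((integrable_id_mul_gaussian μ 1).const_mul _)
      ((integrable_id_mul_gaussian _ s).const_mul _),
    integral_const_mul, integral_const_mul,
    integral_id_mul_gaussian μ one_ne_zero, integral_id_mul_gaussian _ hsne]
  ring
end

section
/- Let k₁₁, k₂₂ ≥ 0, k₁₂ ∈ ℝ with k₁₂² ≤ k₁₁·k₂₂, let σ > 0, and let m₁, m₂ ∈ ℝ. Set ρ = k₁₂ / √((k₁₁ + σ²)·(k₂₂ + σ²)). Then |ρ| < 1, and the Lebesgue density g of the bivariate Gaussian measure with mean (m₁, m₂) and covariance matrix [[k₁₁ + σ², k₁₂],[k₁₂, k₂₂ + σ²]] satisfies, for all y₁, y₂ ∈ ℝ, g(y₁, y₂) = [φ₂(z₁, z₂; ρ)/(φ(z₁)·φ(z₂))] · f₁(y₁) · f₂(y₂), where z_j = (y_j − m_j)/√(k_jj + σ²) and f_j is the density of N(m_j, k_jj + σ²). That is, the Gaussian-process posterior predictive copula update has Gaussian copula density with correlation parameter ρ = k₁₂/√((k₁₁ + σ²)(k₂₂ + σ²)). -/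
open MeasureTheory Matrix

lemma mul_exp_helper {A B c p q : ℝ} (h1 : p = q) (h2 : A = B * c) :
    A * Real.exp p = B * Real.exp q * c := by rw [h1, h2]; ring

lemma gauss2_key (a b k m₁ m₂ ρ : ℝ) (ha : 0 < a) (hb : 0 < b)
    (hd : 0 < a * b - k ^ 2) (hρ : ρ = k / Real.sqrt (a * b)) (y₁ y₂ : ℝ) :
    gauss2PDF ![m₁, m₂] !![a, k; k, b] ![y₁, y₂] =
      biNormalPDF ((y₁ - m₁) / Real.sqrt a) ((y₂ - m₂) / Real.sqrt b) ρ *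
        ((Real.sqrt a)⁻¹ * (Real.sqrt b)⁻¹) := by
  obtain ⟨u, hu, rfl⟩ : ∃ u, 0 < u ∧ a = u ^ 2 :=
    ⟨Real.sqrt a, Real.sqrt_pos.2 ha, (Real.sq_sqrt ha.le).symm⟩
  obtain ⟨v, hv, rfl⟩ : ∃ v, 0 < v ∧ b = v ^ 2 :=
    ⟨Real.sqrt b, Real.sqrt_pos.2 hb, (Real.sq_sqrt hb.le).symm⟩
  have hu2 : Real.sqrt (u ^ 2) = u := Real.sqrt_sq hu.le
  have hv2 : Real.sqrt (v ^ 2) = v := Real.sqrt_sq hv.le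
  have huv : Real.sqrt (u ^ 2 * v ^ 2) = u * v := by
    rw [show u ^ 2 * v ^ 2 = (u * v) ^ 2 by ring, Real.sqrt_sq (by positivity)]
  rw [huv] at hρ
  have h1ρ : 1 - ρ ^ 2 = (u ^ 2 * v ^ 2 - k ^ 2) / (u ^ 2 * v ^ 2) := by
    rw [hρ]; field_simp
  have hsq : Real.sqrt (1 - ρ ^ 2) = Real.sqrt (u ^ 2 * v ^ 2 - k ^ 2) / (u * v) := by
    rw [h1ρ, Real.sqrt_div hd.le, huv]
  have hw : 0 < Real.sqrt (u ^ 2 * v ^ 2 - k ^ 2) := Real.sqrt_pos.2 hd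
  have hdet : (!![u ^ 2, k; k, v ^ 2]).det = u ^ 2 * v ^ 2 - k ^ 2 := by
    simp [Matrix.det_fin_two_of]; ring
  have hinv : (!![u ^ 2, k; k, v ^ 2])⁻¹ =
      (u ^ 2 * v ^ 2 - k ^ 2)⁻¹ • !![v ^ 2, -k; -k, u ^ 2] := by
    rw [Matrix.inv_def, Matrix.adjugate_fin_two_of, Ring.inverse_eq_inv', hdet]
  rw [gauss2PDF, biNormalPDF, hdet, hinv, hsq, hu2, hv2, h1ρ, hρ]
  simp only [Matrix.smul_mulVec, Matrix.mulVec, dotProduct,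
    Fin.sum_univ_two, Pi.sub_apply, Matrix.smul_apply, smul_eq_mul, Matrix.of_apply,
    Matrix.cons_val_zero, Matrix.cons_val_one, Matrix.head_cons,
    Matrix.cons_val', Matrix.empty_val', Matrix.cons_val_fin_one, Matrix.head_fin_const]
  refine mul_exp_helper ?_ ?_
  · field_simp
    ring
  · have hπ := Real.pi_ne_zero
    field_simp

lemma stdNormalPDF_ne_zero (z : ℝ) : stdNormalPDF z ≠ 0 := by
  have : 0 < stdNormalPDF z := by
    unfold stdNormalPDF
    have := Real.pi_pos
    positivity
  exact this.ne'

/-- the Gaussian-process posterior predictive copula update. With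
posterior kernel values `k₁₁, k₂₂ ≥ 0`, `k₁₂² ≤ k₁₁k₂₂`, noise variance `σ² > 0` and
`ρ = k₁₂/√((k₁₁+σ²)(k₂₂+σ²))`, we have `|ρ| < 1`, and the bivariate Gaussian density
with mean `(m₁,m₂)` and covariance `[[k₁₁+σ², k₁₂],[k₁₂, k₂₂+σ²]]` factorizes as the
bivariate Gaussian copula density with correlation `ρ` times the marginal densities of
`N(m₁, k₁₁+σ²)` and `N(m₂, k₂₂+σ²)`. -/
theorem gp_posterior_copula_update
    (k₁₁ k₂₂ k₁₂ σ m₁ m₂ : ℝ) (hk₁₁ : 0 ≤ k₁₁) (hk₂₂ : 0 ≤ k₂₂)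
    (hk : k₁₂ ^ 2 ≤ k₁₁ * k₂₂) (hσ : 0 < σ)
    (ρ : ℝ) (hρ : ρ = k₁₂ / Real.sqrt ((k₁₁ + σ ^ 2) * (k₂₂ + σ ^ 2))) :
    |ρ| < 1 ∧ ∀ y₁ y₂ : ℝ,
      gauss2PDF ![m₁, m₂] !![k₁₁ + σ ^ 2, k₁₂; k₁₂, k₂₂ + σ ^ 2] ![y₁, y₂] =
        (biNormalPDF ((y₁ - m₁) / Real.sqrt (k₁₁ + σ ^ 2))
            ((y₂ - m₂) / Real.sqrt (k₂₂ + σ ^ 2)) ρ /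
          (stdNormalPDF ((y₁ - m₁) / Real.sqrt (k₁₁ + σ ^ 2)) *
            stdNormalPDF ((y₂ - m₂) / Real.sqrt (k₂₂ + σ ^ 2)))) *
        ((Real.sqrt (k₁₁ + σ ^ 2))⁻¹ * stdNormalPDF ((y₁ - m₁) / Real.sqrt (k₁₁ + σ ^ 2))) *
        ((Real.sqrt (k₂₂ + σ ^ 2))⁻¹ * stdNormalPDF ((y₂ - m₂) / Real.sqrt (k₂₂ + σ ^ 2))) := by
  have ha : 0 < k₁₁ + σ ^ 2 := by positivity
  have hb : 0 < k₂₂ + σ ^ 2 := by positivity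
  have hab : 0 < (k₁₁ + σ ^ 2) * (k₂₂ + σ ^ 2) := by positivity
  have hd : 0 < (k₁₁ + σ ^ 2) * (k₂₂ + σ ^ 2) - k₁₂ ^ 2 := by nlinarith [pow_pos hσ 2, mul_nonneg hk₁₁ (sq_nonneg σ), mul_nonneg hk₂₂ (sq_nonneg σ), pow_pos (pow_pos hσ 2) 2]
  constructor
  · rw [← sq_lt_one_iff_abs_lt_one, hρ, div_pow, Real.sq_sqrt hab.le, div_lt_one hab]
    nlinarith
  · intro y₁ y₂
    have h1 := stdNormalPDF_ne_zero ((y₁ - m₁) / Real.sqrt (k₁₁ + σ ^ 2))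
    have h2 := stdNormalPDF_ne_zero ((y₂ - m₂) / Real.sqrt (k₂₂ + σ ^ 2))
    rw [gauss2_key _ _ _ _ _ _ ha hb hd hρ]
    field_simp
end
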